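/- arXiv:2507.11257 — 8 statements merged into one kernel-verified Lean document; each statement's English description precedes it below -/
import Mathlib

section
/- Let W be a finite set, let ε be a real number with 0 < ε ≤ 1, and let d be a positive integer with d ≤ ε|W| / (2e^{2+4/ε}). Then there exists a family 𝒮 of d-element subsets of W such that any two distinct members S₁, S₂ ∈ 𝒮 satisfy |S₁ ∩ S₂| ≤ εd/2, and |𝒮| ≥ e^{d-1}. -/
open Finset

/-- Number of words fixed on a set `A` is at most `q ^ (d - |A|)`. -/
lemma fiber_card_le (d q : ℕ) (c : Fin d → Fin q) (A : Finset (Fin d)) :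
    (univ.filter (fun w : Fin d → Fin q => ∀ i ∈ A, w i = c i)).card
      ≤ q ^ (d - A.card) := by
  classical
  have h := Finset.card_le_card_of_injOn
    (f := fun (w : Fin d → Fin q) (i : ((univ \ A : Finset (Fin d)) : Finset (Fin d))) => w i.1)
    (s := univ.filter (fun w : Fin d → Fin q => ∀ i ∈ A, w i = c i))
    (t := (univ : Finset (((univ \ A : Finset (Fin d)) : Finset (Fin d)) → Fin q)))
    (fun w _ => mem_univ _)
    (by
      intro w1 h1 w2 h2 hEq
      simp only [mem_coe, mem_filter] at h1 h2
      funext i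
      by_cases hi : i ∈ A
      · rw [h1.2 i hi, h2.2 i hi]
      · have : i ∈ univ \ A := by simp [hi]
        exact congrFun hEq ⟨i, this⟩)
  calc (univ.filter (fun w : Fin d → Fin q => ∀ i ∈ A, w i = c i)).card
      ≤ (univ : Finset (((univ \ A : Finset (Fin d)) : Finset (Fin d)) → Fin q)).card := h
    _ = q ^ (d - A.card) := by
        rw [Finset.card_univ, Fintype.card_fun, Fintype.card_fin, Fintype.card_coe,
          Finset.card_sdiff_of_subset (subset_univ A), Finset.card_univ, Fintype.card_fin]

/-- Ball bound: the number of words agreeing with `c` in at least `m` positions. -/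
lemma ball_card_le (d q m : ℕ) (c : Fin d → Fin q) :
    (univ.filter (fun w : Fin d → Fin q =>
        m ≤ (univ.filter (fun i => w i = c i)).card)).card
      ≤ d.choose m * q ^ (d - m) := by
  classical
  have hsub : (univ.filter (fun w : Fin d → Fin q =>
        m ≤ (univ.filter (fun i => w i = c i)).card))
      ⊆ (powersetCard m (univ : Finset (Fin d))).biUnion
          (fun A => univ.filter (fun w : Fin d → Fin q => ∀ i ∈ A, w i = c i)) := by
    intro w hw
    simp only [mem_filter, mem_univ, true_and] at hw
    obtain ⟨A, hA, hAcard⟩ := Finset.exists_subset_card_eq hw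
    refine Finset.mem_biUnion.2 ⟨A, ?_, ?_⟩
    · exact Finset.mem_powersetCard_univ.2 hAcard
    · simp only [mem_filter, mem_univ, true_and]
      intro i hi
      have := hA hi
      simpa using (Finset.mem_filter.1 this).2
  calc _ ≤ ((powersetCard m (univ : Finset (Fin d))).biUnion
          (fun A => univ.filter (fun w : Fin d → Fin q => ∀ i ∈ A, w i = c i))).card :=
        Finset.card_le_card hsub
    _ ≤ ∑ A ∈ powersetCard m (univ : Finset (Fin d)),
          (univ.filter (fun w : Fin d → Fin q => ∀ i ∈ A, w i = c i)).card :=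
        Finset.card_biUnion_le
    _ ≤ ∑ _A ∈ powersetCard m (univ : Finset (Fin d)), q ^ (d - m) := by
        refine Finset.sum_le_sum ?_
        intro A hA
        have hAcard : A.card = m := (Finset.mem_powersetCard.1 hA).2
        simpa [hAcard] using fiber_card_le d q c A
    _ = d.choose m * q ^ (d - m) := by
        rw [Finset.sum_const, Finset.card_powersetCard, Finset.card_univ, Fintype.card_fin,
          smul_eq_mul]

set_option maxHeartbeats 1000000 in
/-- Existence of a large code with small pairwise agreement. -/
lemma code_exists (d q m : ℕ) (hm : m ≤ d) :
    ∃ C : Finset (Fin d → Fin q),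
      (∀ c1 ∈ C, ∀ c2 ∈ C, c1 ≠ c2 → (univ.filter (fun i => c1 i = c2 i)).card < m) ∧
      q ^ d ≤ C.card * (d.choose m * q ^ (d - m)) := by
  classical
  set P : Finset (Fin d → Fin q) → Prop := fun C =>
    ∀ c1 ∈ C, ∀ c2 ∈ C, c1 ≠ c2 → (univ.filter (fun i => c1 i = c2 i)).card < m with hP
  set T : Finset (Finset (Fin d → Fin q)) := univ.filter P with hT
  have hTne : T.Nonempty :=
    ⟨∅, Finset.mem_filter.2 ⟨mem_univ _, fun c1 hc1 => absurd hc1 (Finset.notMem_empty _)⟩⟩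
  obtain ⟨C, hCT, hCmax⟩ := Finset.exists_max_image T Finset.card hTne
  have hCP : P C := (Finset.mem_filter.1 hCT).2
  -- symmetry of agreement
  have hsymm : ∀ c1 c2 : Fin d → Fin q,
      (univ.filter (fun i => c1 i = c2 i)).card
        = (univ.filter (fun i => c2 i = c1 i)).card := by
    intro c1 c2
    congr 1
    exact Finset.filter_congr (fun i _ => by constructor <;> exact Eq.symm
      )
  -- covering
  have hcov : ∀ w : Fin d → Fin q, ∃ c ∈ C,
      m ≤ (univ.filter (fun i => w i = c i)).card := by
    intro w
    by_cases hw : w ∈ C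
    · refine ⟨w, hw, ?_⟩
      simpa using hm
    · by_contra hcon
      push_neg at hcon
      have hins : ¬ (∀ c1 ∈ insert w C, ∀ c2 ∈ insert w C, c1 ≠ c2 →
          (univ.filter (fun i => c1 i = c2 i)).card < m) := by
        intro hPins
        have : (insert w C).card ≤ C.card :=
          hCmax _ (Finset.mem_filter.2 ⟨mem_univ _, hPins⟩)
        rw [Finset.card_insert_of_notMem hw] at this
        omega
      push_neg at hins
      obtain ⟨c1, hc1, c2, hc2, hne, hge⟩ := hins
      rcases Finset.mem_insert.1 hc1 with h1 | h1 <;>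
        rcases Finset.mem_insert.1 hc2 with h2 | h2
      · exact hne (h1.trans h2.symm)
      · subst h1
        exact absurd hge (by simpa using not_le.2 (Nat.lt_of_lt_of_le (hcon c2 h2) le_rfl))
      · subst h2
        have := hcon c1 h1
        rw [hsymm] at this
        exact absurd hge (not_le.2 this)
      · exact absurd hge (not_le.2 (hCP c1 h1 c2 h2 hne))
  -- counting
  have hsub : (univ : Finset (Fin d → Fin q)) ⊆ C.biUnion (fun c =>
      univ.filter (fun w : Fin d → Fin q => m ≤ (univ.filter (fun i => w i = c i)).card)) := by
    intro w _
    obtain ⟨c, hc, hwc⟩ := hcov w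
    exact Finset.mem_biUnion.2 ⟨c, hc, Finset.mem_filter.2 ⟨mem_univ _, hwc⟩⟩
  refine ⟨C, hCP, ?_⟩
  calc q ^ d = (univ : Finset (Fin d → Fin q)).card := by
        rw [Finset.card_univ, Fintype.card_fun, Fintype.card_fin, Fintype.card_fin]
    _ ≤ (C.biUnion (fun c =>
        univ.filter (fun w : Fin d → Fin q => m ≤ (univ.filter (fun i => w i = c i)).card))).card :=
        Finset.card_le_card hsub
    _ ≤ ∑ c ∈ C, (univ.filter (fun w : Fin d → Fin q =>
        m ≤ (univ.filter (fun i => w i = c i)).card)).card := Finset.card_biUnion_le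
    _ ≤ ∑ _c ∈ C, d.choose m * q ^ (d - m) :=
        Finset.sum_le_sum (fun c _ => ball_card_le d q m c)
    _ = C.card * (d.choose m * q ^ (d - m)) := by rw [Finset.sum_const, smul_eq_mul]

lemma numeric_bound (ε : ℝ) (hε : 0 < ε) (hε1 : ε ≤ 1) (d q m : ℕ)
    (hqE : Real.exp (2 + 4 / ε) ≤ (q : ℝ)) (hm : ε * d / 2 ≤ (m : ℝ)) :
    Real.exp ((d : ℝ) - 1) * 2 ^ d ≤ (q : ℝ) ^ m := by
  have hlog2 : Real.log 2 ≤ 1 := by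
    have := Real.log_le_sub_one_of_pos (by norm_num : (0:ℝ) < 2)
    linarith
  have h2 : (2 : ℝ) ^ d = Real.exp ((d : ℝ) * Real.log 2) := by
    rw [Real.exp_nat_mul, Real.exp_log (by norm_num : (0:ℝ) < 2)]
  have key : ((d : ℝ) - 1) + (d : ℝ) * Real.log 2 ≤ (2 + 4 / ε) * m := by
    have h1 : (2 + 4 / ε) * (ε * d / 2) = ε * d + 2 * d := by
      field_simp
      ring
    have h2' : (2 + 4 / ε) * (ε * d / 2) ≤ (2 + 4 / ε) * m := by
      apply mul_le_mul_of_nonneg_left hm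
      positivity
    have hεd : 0 ≤ ε * d := by positivity
    have hdlog : (d : ℝ) * Real.log 2 ≤ (d : ℝ) := by
      nlinarith [Nat.cast_nonneg (α := ℝ) d]
    nlinarith
  calc Real.exp ((d : ℝ) - 1) * 2 ^ d
      = Real.exp (((d : ℝ) - 1) + (d : ℝ) * Real.log 2) := by rw [Real.exp_add, h2]
    _ ≤ Real.exp ((2 + 4 / ε) * m) := Real.exp_le_exp.2 key
    _ = Real.exp (2 + 4 / ε) ^ m := by rw [← Real.exp_nat_mul, mul_comm]
    _ ≤ (q : ℝ) ^ m := pow_le_pow_left₀ (Real.exp_nonneg _) hqE m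



/-- Let `W` be a finite set, `ε` a real with `0 < ε ≤ 1`, and `d` a
positive integer with `d ≤ ε|W| / (2 e^{2 + 4/ε})`. Then there is a family `𝒮` of
`d`-element subsets of `W` such that any two distinct members intersect in at most
`εd/2` elements, and `|𝒮| ≥ e^{d-1}`. -/
theorem stmt_0 {α : Type*} [DecidableEq α] (W : Finset α) (ε : ℝ) (hε : 0 < ε) (hε1 : ε ≤ 1)
    (d : ℕ) (hd : 0 < d)
    (hdle : (d : ℝ) ≤ ε * W.card / (2 * Real.exp (2 + 4 / ε))) :
    ∃ 𝒮 : Finset (Finset α),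
      (∀ S ∈ 𝒮, S ⊆ W ∧ S.card = d) ∧
      (∀ S₁ ∈ 𝒮, ∀ S₂ ∈ 𝒮, S₁ ≠ S₂ → ((S₁ ∩ S₂).card : ℝ) ≤ ε * d / 2) ∧
      Real.exp ((d : ℝ) - 1) ≤ (𝒮.card : ℝ) := by
  set n := W.card with hn
  set E := Real.exp (2 + 4 / ε) with hE
  have hd0 : (0:ℝ) < (d:ℝ) := by exact_mod_cast hd
  have hE1 : (1:ℝ) ≤ E := Real.one_le_exp (by positivity)
  have hn1 : 2 * E * (d:ℝ) ≤ ε * n := by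
    have h2E : (0:ℝ) < 2 * E := by positivity
    calc 2 * E * (d:ℝ) ≤ 2 * E * (ε * n / (2 * E)) :=
          mul_le_mul_of_nonneg_left hdle h2E.le
      _ = ε * n := by field_simp
  set q := n / d with hq
  have hqE : E ≤ (q:ℝ) := by
    have hmod : n % d < d := Nat.mod_lt _ hd
    have hdecomp : d * q + n % d = n := Nat.div_add_mod n d
    have hnlt : (n:ℝ) < (d:ℝ) * q + d := by
      rw [← hdecomp]
      push_cast
      have : ((n % d : ℕ) : ℝ) < (d:ℝ) := by exact_mod_cast hmod
      linarith
    have hn2 : 2 * E * (d:ℝ) ≤ (n:ℝ) := by nlinarith [Nat.cast_nonneg (α := ℝ) n]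
    have hEd : E * (d:ℝ) ≤ (d:ℝ) * q := by nlinarith
    have := (mul_le_mul_iff_of_pos_right hd0).1 (by linarith [hEd] : E * (d:ℝ) ≤ (q:ℝ) * d)
    exact this
  set m := Nat.floor (ε * d / 2) + 1 with hm
  have hmd2 : ε * d / 2 < (m:ℝ) := by
    rw [hm]
    push_cast
    exact Nat.lt_floor_add_one _
  have hmle : m ≤ d := by
    have h1 : ((Nat.floor (ε * d / 2) : ℕ) : ℝ) < (d:ℝ) :=
      lt_of_le_of_lt (Nat.floor_le (by positivity)) (by nlinarith)
    have : Nat.floor (ε * d / 2) < d := by exact_mod_cast h1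
    omega
  obtain ⟨C, hCa, hCcount⟩ := code_exists d q m hmle
  have hq1 : 1 ≤ q := by
    rcases Nat.eq_zero_or_pos q with h | h
    · exfalso; rw [h] at hqE; norm_num at hqE; linarith
    · exact h
  have hql : q ^ m ≤ C.card * d.choose m := by
    have hpow : 0 < q ^ (d - m) := pow_pos hq1 _
    have hsplit : q ^ m * q ^ (d - m) = q ^ d := by
      rw [← pow_add]; congr 1; omega
    have : q ^ m * q ^ (d - m) ≤ C.card * d.choose m * q ^ (d - m) := by
      rw [hsplit, mul_assoc]; exact hCcount
    exact Nat.le_of_mul_le_mul_right this hpow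
  have hchoose : d.choose m ≤ 2 ^ d := by
    calc d.choose m ≤ ∑ i ∈ Finset.range (d+1), d.choose i :=
          Finset.single_le_sum (fun i _ => Nat.zero_le _) (Finset.mem_range.2 (by omega))
      _ = 2 ^ d := Nat.sum_range_choose d
  have hCcard : Real.exp ((d:ℝ) - 1) ≤ (C.card : ℝ) := by
    have hb := numeric_bound ε hε hε1 d q m hqE hmd2.le
    have hql' : ((q:ℝ)) ^ m ≤ (C.card : ℝ) * (d.choose m : ℝ) := by exact_mod_cast hql
    have hch' : ((d.choose m : ℕ) : ℝ) ≤ 2 ^ d := by exact_mod_cast hchoose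
    have h2d : (0:ℝ) < 2 ^ d := by positivity
    have hchain : Real.exp ((d:ℝ) - 1) * 2 ^ d ≤ (C.card : ℝ) * 2 ^ d := by
      calc Real.exp ((d:ℝ) - 1) * 2 ^ d ≤ (q:ℝ) ^ m := hb
        _ ≤ (C.card : ℝ) * (d.choose m : ℝ) := hql'
        _ ≤ (C.card : ℝ) * 2 ^ d :=
            mul_le_mul_of_nonneg_left hch' (Nat.cast_nonneg _)
    exact le_of_mul_le_mul_right hchain h2d
  -- embedding of the grid into W
  have hcard : Fintype.card (Fin q × Fin d) ≤ Fintype.card {x // x ∈ W} := by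
    rw [Fintype.card_prod, Fintype.card_fin, Fintype.card_fin, Fintype.card_coe]
    calc q * d = n / d * d := rfl
      _ ≤ n := Nat.div_mul_le_self n d
  obtain ⟨f⟩ := Function.Embedding.nonempty_of_card_le hcard
  set g : Fin q × Fin d → α := fun p => (f p : α) with hg
  have hginj : Function.Injective g := fun a b hab =>
    f.injective (Subtype.coe_injective hab)
  set S : (Fin d → Fin q) → Finset α :=
    fun w => Finset.univ.image (fun i : Fin d => g (w i, i)) with hS
  have hScard : ∀ w, (S w).card = d := by
    intro w
    rw [hS]
    rw [Finset.card_image_of_injective _ (fun i j hij => by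
      have := hginj hij
      exact (Prod.mk.inj this).2)]
    simp
  have hSsubW : ∀ w, S w ⊆ W := by
    intro w x hx
    rw [hS] at hx
    obtain ⟨i, _, rfl⟩ := Finset.mem_image.1 hx
    exact (f (w i, i)).2
  have hSinter : ∀ w1 w2 : Fin d → Fin q,
      (S w1 ∩ S w2) ⊆ (Finset.univ.filter (fun i => w1 i = w2 i)).image
        (fun i : Fin d => g (w1 i, i)) := by
    intro w1 w2 x hx
    obtain ⟨hx1, hx2⟩ := Finset.mem_inter.1 hx
    obtain ⟨i, _, rfl⟩ := Finset.mem_image.1 hx1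
    obtain ⟨j, _, hji⟩ := Finset.mem_image.1 hx2
    have hpair := hginj hji
    have hji' : j = i := (Prod.mk.inj hpair).2
    subst hji'
    have hw : w1 j = w2 j := ((Prod.mk.inj hpair).1).symm
    exact Finset.mem_image.2 ⟨j, Finset.mem_filter.2 ⟨Finset.mem_univ _, hw⟩, rfl⟩
  have hSinj : Function.Injective S := by
    intro w1 w2 hEq
    funext i
    have hmem : g (w1 i, i) ∈ S w2 := by
      rw [← hEq, hS]
      exact Finset.mem_image.2 ⟨i, Finset.mem_univ _, rfl⟩
    rw [hS] at hmem
    obtain ⟨j, _, hj⟩ := Finset.mem_image.1 hmem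
    have hpair := hginj hj
    have hji : j = i := (Prod.mk.inj hpair).2
    subst hji
    exact ((Prod.mk.inj hpair).1).symm
  refine ⟨C.image S, ?_, ?_, ?_⟩
  · intro T hT
    obtain ⟨w, _, rfl⟩ := Finset.mem_image.1 hT
    exact ⟨hSsubW w, hScard w⟩
  · intro S₁ hS₁ S₂ hS₂ hne
    obtain ⟨w1, hw1, rfl⟩ := Finset.mem_image.1 hS₁
    obtain ⟨w2, hw2, rfl⟩ := Finset.mem_image.1 hS₂
    have hwne : w1 ≠ w2 := fun h => hne (by rw [h])
    have hagree := hCa w1 hw1 w2 hw2 hwne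
    have hcardle : (S w1 ∩ S w2).card
        ≤ (Finset.univ.filter (fun i => w1 i = w2 i)).card :=
      le_trans (Finset.card_le_card (hSinter w1 w2)) (Finset.card_image_le)
    have h1 : (S w1 ∩ S w2).card ≤ Nat.floor (ε * d / 2) := by omega
    calc ((S w1 ∩ S w2).card : ℝ) ≤ (Nat.floor (ε * d / 2) : ℝ) := by exact_mod_cast h1
      _ ≤ ε * d / 2 := Nat.floor_le (by positivity)
  · rw [Finset.card_image_of_injective _ hSinj]
    exact hCcard
end

section
/- Let ℓ be an even positive integer and let t be an integer with 1 ≤ t ≤ ℓ/8. If X₁, …, X_ℓ are independent random variables each taking values 0 and 1 with probability 1/2, and X = X₁ + ⋯ + X_ℓ, then Pr[X ≥ ℓ/2 + t] ≥ (1/15)·e^{-16t²/ℓ}. Equivalently, 2^{-ℓ} · Σ_{j = ℓ/2 + t}^{ℓ} C(ℓ, j) ≥ (1/15)·e^{-16t²/ℓ}. -/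
open Finset

lemma cb_sq_upper (m : ℕ) : (3*m+1) * (Nat.centralBinom m)^2 ≤ 16^m := by
  induction m with
  | zero => simp [Nat.centralBinom]
  | succ n ih =>
      have key : (n+1) * Nat.centralBinom (n+1) = 2 * (2*n+1) * Nat.centralBinom n :=
        Nat.succ_mul_centralBinom_succ n
      have h2 : (n+1)^2 * (Nat.centralBinom (n+1))^2
          = 4*(2*n+1)^2 * (Nat.centralBinom n)^2 := by
        have := congrArg (· ^ 2) key
        simp only [mul_pow] at this
        nlinarith [this]
      have hpoly : (3*(n+1)+1) * (4*(2*n+1)^2) ≤ 16 * (n+1)^2 * (3*n+1) := by nlinarith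
      have hmain : (n+1)^2 * ((3*(n+1)+1) * (Nat.centralBinom (n+1))^2)
          ≤ (n+1)^2 * 16^(n+1) := by
        calc (n+1)^2 * ((3*(n+1)+1) * (Nat.centralBinom (n+1))^2)
            = (3*(n+1)+1) * ((n+1)^2 * (Nat.centralBinom (n+1))^2) := by ring
          _ = (3*(n+1)+1) * (4*(2*n+1)^2 * (Nat.centralBinom n)^2) := by rw [h2]
          _ = (3*(n+1)+1) * (4*(2*n+1)^2) * (Nat.centralBinom n)^2 := by ring
          _ ≤ 16 * (n+1)^2 * (3*n+1) * (Nat.centralBinom n)^2 :=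
              Nat.mul_le_mul_right _ hpoly
          _ = 16 * (n+1)^2 * ((3*n+1) * (Nat.centralBinom n)^2) := by ring
          _ ≤ 16 * (n+1)^2 * 16^n := Nat.mul_le_mul_left _ ih
          _ = (n+1)^2 * 16^(n+1) := by ring
      exact Nat.le_of_mul_le_mul_left hmain (by positivity)

lemma cb_sq_lower (m : ℕ) (hm : 1 ≤ m) : 5 * 16^m ≤ (16*m+4) * (Nat.centralBinom m)^2 := by
  induction m, hm using Nat.le_induction with
  | base => decide
  | succ n hn ih =>
      have key : (n+1) * Nat.centralBinom (n+1) = 2 * (2*n+1) * Nat.centralBinom n :=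
        Nat.succ_mul_centralBinom_succ n
      have h2 : (n+1)^2 * (Nat.centralBinom (n+1))^2
          = 4*(2*n+1)^2 * (Nat.centralBinom n)^2 := by
        have := congrArg (· ^ 2) key
        simp only [mul_pow] at this
        nlinarith [this]
      have hpoly : (16*n+4) * (16 * (n+1)^2) ≤ (16*(n+1)+4) * (4*(2*n+1)^2) := by nlinarith
      have hmain : ((16*n+4) * (n+1)^2) * (5 * 16^(n+1))
          ≤ ((16*n+4) * (n+1)^2) * ((16*(n+1)+4) * (Nat.centralBinom (n+1))^2) := by
        calc ((16*n+4) * (n+1)^2) * (5 * 16^(n+1))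
            = ((16*n+4) * (16 * (n+1)^2)) * (5 * 16^n) := by ring
          _ ≤ ((16*(n+1)+4) * (4*(2*n+1)^2)) * (5 * 16^n) :=
              Nat.mul_le_mul_right _ hpoly
          _ ≤ ((16*(n+1)+4) * (4*(2*n+1)^2)) * ((16*n+4) * (Nat.centralBinom n)^2) :=
              Nat.mul_le_mul_left _ ih
          _ = ((16*n+4)) * ((16*(n+1)+4) * (4*(2*n+1)^2 * (Nat.centralBinom n)^2)) := by ring
          _ = ((16*n+4)) * ((16*(n+1)+4) * ((n+1)^2 * (Nat.centralBinom (n+1))^2)) := by rw [← h2]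
          _ = ((16*n+4) * (n+1)^2) * ((16*(n+1)+4) * (Nat.centralBinom (n+1))^2) := by ring
      exact Nat.le_of_mul_le_mul_left hmain (by positivity)

lemma choose_anti (m : ℕ) {j k : ℕ} (hmj : m ≤ j) (hjk : j ≤ k) :
    (2*m).choose k ≤ (2*m).choose j := by
  induction k, hjk using Nat.le_induction with
  | base => exact le_refl _
  | succ k hk ih =>
      have step : (2*m).choose (k+1) ≤ (2*m).choose k := by
        have h := Nat.choose_succ_right_eq (2*m) k
        have h2 : 2*m - k ≤ k+1 := by omega
        have h3 : (2*m).choose (k+1) * (k+1) ≤ (2*m).choose k * (k+1) := by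
          calc (2*m).choose (k+1) * (k+1) = (2*m).choose k * (2*m - k) := h
            _ ≤ (2*m).choose k * (k+1) := Nat.mul_le_mul_left _ h2
        exact Nat.le_of_mul_le_mul_right h3 (Nat.succ_pos k)
      exact step.trans ih

lemma ratio_bound (m : ℕ) : ∀ s : ℕ, 2*s ≤ m →
    (Nat.centralBinom m : ℝ) * Real.exp (-2 * (s:ℝ)^2 / m) ≤ ((2*m).choose (m+s) : ℝ) := by
  intro s
  induction s with
  | zero => intro _; simp [Nat.centralBinom]
  | succ s ih =>
      intro hs
      have hm2 : 2*s + 2 ≤ m := by omega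
      have hmR : (2:ℝ)*s + 2 ≤ (m:ℝ) := by exact_mod_cast hm2
      have hmpos : (0:ℝ) < m := by nlinarith [Nat.cast_nonneg (α := ℝ) s]
      have hsm : s ≤ m := by omega
      -- nat identity
      have hidn : (2*m).choose (m+s+1) * (m+s+1) = (2*m).choose (m+s) * (m - s) := by
        have h := Nat.choose_succ_right_eq (2*m) (m+s)
        have : 2*m - (m+s) = m - s := by omega
        rw [this] at h
        exact h
      have hid : ((2*m).choose (m+s+1) : ℝ) * ((m:ℝ)+s+1)
          = ((2*m).choose (m+s) : ℝ) * ((m:ℝ) - s) := by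
        have := congrArg (Nat.cast (R := ℝ)) hidn
        push_cast [Nat.cast_sub hsm] at this
        linarith [this]
      set y : ℝ := ((4*s+2):ℝ)/m with hy
      have hexp1 : y + 1 ≤ Real.exp y := Real.add_one_le_exp y
      have hkey : Real.exp (-y) * ((m:ℝ)+s+1) ≤ (m:ℝ) - s := by
        have h1 : ((m:ℝ)+s+1) * m ≤ ((m:ℝ) - s) * ((4*s+2) + m) := by nlinarith
        have h2 : ((m:ℝ)+s+1) ≤ ((m:ℝ) - s) * (y + 1) := by
          rw [hy, div_add' _ _ _ (ne_of_gt hmpos), ← mul_div_assoc, le_div_iff₀ hmpos]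
          nlinarith
        have h3 : ((m:ℝ)+s+1) ≤ ((m:ℝ) - s) * Real.exp y := by
          have hms : (0:ℝ) ≤ (m:ℝ) - s := by nlinarith [Nat.cast_nonneg (α := ℝ) s]
          nlinarith [mul_le_mul_of_nonneg_left hexp1 hms]
        calc Real.exp (-y) * ((m:ℝ)+s+1) ≤ Real.exp (-y) * (((m:ℝ) - s) * Real.exp y) := by
              exact mul_le_mul_of_nonneg_left h3 (le_of_lt (Real.exp_pos _))
          _ = ((m:ℝ) - s) * (Real.exp y * Real.exp (-y)) := by ring
          _ = (m:ℝ) - s := by rw [← Real.exp_add]; simp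
      have hsplit : Real.exp (-2 * ((s:ℕ)+1:ℝ)^2 / m)
          = Real.exp (-2 * (s:ℝ)^2 / m) * Real.exp (-y) := by
        rw [← Real.exp_add]
        congr 1
        rw [hy]
        field_simp
        ring
      have hIH := ih (by omega)
      have hXnonneg : (0:ℝ) ≤ ((2*m).choose (m+s) : ℝ) := Nat.cast_nonneg _
      have hstep : ((2*m).choose (m+s) : ℝ) * Real.exp (-y) ≤ ((2*m).choose (m+s+1) : ℝ) := by
        have hd : Real.exp (-y) ≤ ((m:ℝ) - s) / ((m:ℝ)+s+1) := by
          rw [le_div_iff₀ (by nlinarith [Nat.cast_nonneg (α := ℝ) s])]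
          linarith [hkey]
        have hX' : ((2*m).choose (m+s+1) : ℝ) = ((2*m).choose (m+s) : ℝ) * (((m:ℝ) - s) / ((m:ℝ)+s+1)) := by
          rw [mul_div_assoc'] at *
          rw [eq_div_iff (by nlinarith [Nat.cast_nonneg (α := ℝ) s] : ((m:ℝ)+s+1) ≠ 0)]
          linarith [hid]
        rw [hX']
        exact mul_le_mul_of_nonneg_left hd hXnonneg
      have hcast : ((s+1 : ℕ) : ℝ) = (s:ℝ) + 1 := by push_cast; ring
      calc (Nat.centralBinom m : ℝ) * Real.exp (-2 * ((s+1:ℕ):ℝ)^2 / m)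
          = (Nat.centralBinom m : ℝ) * (Real.exp (-2 * (s:ℝ)^2 / m) * Real.exp (-y)) := by
            rw [hcast, hsplit]
        _ = ((Nat.centralBinom m : ℝ) * Real.exp (-2 * (s:ℝ)^2 / m)) * Real.exp (-y) := by ring
        _ ≤ ((2*m).choose (m+s) : ℝ) * Real.exp (-y) :=
            mul_le_mul_of_nonneg_right hIH (le_of_lt (Real.exp_pos _))
        _ ≤ ((2*m).choose (m+s+1) : ℝ) := hstep

lemma sum_sym (m : ℕ) : 2 * (∑ j ∈ Icc (m+1) (2*m), (2*m).choose j) + (2*m).choose m = 4^m := by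
  have h1 : ∑ j ∈ range (2*m+1), (2*m).choose j = 4^m := by
    rw [Nat.sum_range_choose]
    rw [show (4:ℕ) = 2^2 by norm_num, ← pow_mul]
  have hsplit : ∑ j ∈ Ico 0 m, (2*m).choose j + ∑ j ∈ Ico m (2*m+1), (2*m).choose j
      = ∑ j ∈ range (2*m+1), (2*m).choose j := by
    rw [Finset.range_eq_Ico]
    exact Finset.sum_Ico_consecutive _ (Nat.zero_le m) (by omega)
  have hbot : ∑ j ∈ Ico m (2*m+1), (2*m).choose j
      = (2*m).choose m + ∑ j ∈ Ico (m+1) (2*m+1), (2*m).choose j :=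
    Finset.sum_eq_sum_Ico_succ_bot (by omega) _
  have hrefl : ∑ j ∈ Ico 0 m, (2*m).choose j = ∑ j ∈ Ico (m+1) (2*m+1), (2*m).choose j := by
    calc ∑ j ∈ Ico 0 m, (2*m).choose j = ∑ j ∈ range m, (2*m).choose j := by
          rw [Finset.range_eq_Ico]
      _ = ∑ j ∈ range m, (2*m).choose (m - 1 - j) :=
          (Finset.sum_range_reflect (fun j => (2*m).choose j) m).symm
      _ = ∑ j ∈ range m, (2*m).choose (m + 1 + j) := by
          apply Finset.sum_congr rfl
          intro i hi
          simp only [Finset.mem_range] at hi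
          have h : m + 1 + i = 2*m - (m - 1 - i) := by omega
          rw [h, Nat.choose_symm (by omega)]
      _ = ∑ j ∈ range (2*m+1 - (m+1)), (2*m).choose (m + 1 + j) := by
          have h : 2*m+1 - (m+1) = m := by omega
          rw [h]
      _ = ∑ j ∈ Ico (m+1) (2*m+1), (2*m).choose j :=
          (Finset.sum_Ico_eq_sum_range _ _ _).symm
  have hIcc : Icc (m+1) (2*m) = Ico (m+1) (2*m+1) := (Finset.Ico_add_one_right_eq_Icc _ _).symm
  rw [hIcc, ← h1]
  linarith [hsplit, hbot, hrefl]




/-- For an even positive integer `ℓ` and an integer `t` with `1 ≤ t ≤ ℓ/8`,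
the upper tail of the Binomial(ℓ, 1/2) distribution satisfies
`2^{-ℓ} · Σ_{j = ℓ/2 + t}^{ℓ} C(ℓ, j) ≥ (1/15)·e^{-16 t² / ℓ}`. -/
theorem stmt_2 (ℓ t : ℕ) (hℓpos : 0 < ℓ) (heven : Even ℓ) (ht1 : 1 ≤ t) (ht8 : 8 * t ≤ ℓ) :
    (1 / 15 : ℝ) * Real.exp (-16 * (t : ℝ) ^ 2 / (ℓ : ℝ)) ≤
      (∑ j ∈ Finset.Icc (ℓ / 2 + t) ℓ, (ℓ.choose j : ℝ)) / 2 ^ ℓ := by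
  obtain ⟨m, rfl⟩ := heven
  have h2m : m + m = 2 * m := by ring
  rw [h2m] at *
  have hm4 : 4 * t ≤ m := by omega
  have hm1 : 1 ≤ m := by omega
  have hdiv : 2 * m / 2 = m := by omega
  rw [hdiv]
  have hmR : (0:ℝ) < m := by exact_mod_cast hm1
  have hpow : (2:ℝ) ^ (2*m) = 4 ^ m := by
    rw [pow_mul]; norm_num
  rw [hpow]
  set C := Nat.centralBinom m with hC
  have hEeq : Real.exp (-16 * (t : ℝ) ^ 2 / ((2*m : ℕ) : ℝ))
      = Real.exp (-2 * ((2*t : ℕ):ℝ)^2 / (m:ℝ)) := by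
    congr 1
    push_cast
    field_simp
    ring
  rw [hEeq]
  set E := Real.exp (-2 * ((2*t : ℕ):ℝ)^2 / (m:ℝ)) with hE
  have hEpos : 0 < E := Real.exp_pos _
  have hsum_cast : (∑ j ∈ Icc (m + t) (2*m), ((2*m).choose j : ℝ))
      = ((∑ j ∈ Icc (m + t) (2*m), (2*m).choose j : ℕ) : ℝ) := by push_cast; rfl
  rcases le_or_gt (16*m+4) (1125*(t+1)^2) with hA | hB
  · -- Case A
    have h4 : 4^m ≤ 15*(t+1)*C := by
      have l1 := cb_sq_lower m hm1
      have step1 : (16*m+4) * C^2 ≤ 1125*(t+1)^2 * C^2 := Nat.mul_le_mul_right _ hA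
      have step2 : 5 * 16^m ≤ 5 * ((15*(t+1)*C)^2) := by
        calc 5 * 16^m ≤ (16*m+4) * C^2 := l1
          _ ≤ 1125*(t+1)^2 * C^2 := step1
          _ = 5 * ((15*(t+1)*C)^2) := by ring
      have h16 : 16^m ≤ (15*(t+1)*C)^2 := Nat.le_of_mul_le_mul_left step2 (by norm_num)
      have hsq : (4^m)^2 ≤ (15*(t+1)*C)^2 := by
        calc (4^m)^2 = 16^m := by rw [← pow_mul, mul_comm, pow_mul]; norm_num
          _ ≤ (15*(t+1)*C)^2 := h16
      exact (Nat.pow_le_pow_iff_left two_ne_zero).1 hsq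
    have hratio := ratio_bound m (2*t) (by omega)
    have hcard : (Icc (m+t) (m+2*t)).card = t+1 := by rw [Nat.card_Icc]; omega
    have hsum1 : (t+1) * (2*m).choose (m+2*t) ≤ ∑ j ∈ Icc (m+t) (m+2*t), (2*m).choose j := by
      have h := Finset.card_nsmul_le_sum (Icc (m+t) (m+2*t)) (fun j => (2*m).choose j)
        ((2*m).choose (m+2*t)) (by
          intro j hj
          rw [Finset.mem_Icc] at hj
          exact choose_anti m (by omega) hj.2)
      rwa [hcard, smul_eq_mul] at h
    have hsum2 : ∑ j ∈ Icc (m+t) (m+2*t), (2*m).choose j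
        ≤ ∑ j ∈ Icc (m+t) (2*m), (2*m).choose j :=
      Finset.sum_le_sum_of_subset (Finset.Icc_subset_Icc_right (by omega))
    have hT : ((t:ℝ)+1) * ((C:ℝ) * E) ≤ ((∑ j ∈ Icc (m + t) (2*m), (2*m).choose j : ℕ) : ℝ) := by
      calc ((t:ℝ)+1) * ((C:ℝ) * E) ≤ ((t:ℝ)+1) * ((2*m).choose (m+2*t) : ℝ) :=
            mul_le_mul_of_nonneg_left hratio (by positivity)
        _ ≤ ((∑ j ∈ Icc (m + t) (2*m), (2*m).choose j : ℕ) : ℝ) := by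
            rw [show ((t:ℝ)+1) = ((t+1 : ℕ):ℝ) by push_cast; ring, ← Nat.cast_mul]
            exact_mod_cast le_trans hsum1 hsum2
    have h4R : (4:ℝ)^m ≤ 15*((t:ℝ)+1)*(C:ℝ) := by exact_mod_cast h4
    rw [hsum_cast, le_div_iff₀ (by positivity)]
    calc (1/15 : ℝ) * E * 4^m = (1/15 * 4^m) * E := by ring
      _ ≤ (((t:ℝ)+1)*(C:ℝ)) * E := by
          apply mul_le_mul_of_nonneg_right _ (le_of_lt hEpos)
          linarith
      _ = ((t:ℝ)+1) * ((C:ℝ) * E) := by ring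
      _ ≤ _ := hT
  · -- Case B
    obtain ⟨u, rfl⟩ : ∃ u, t = u + 1 := ⟨t-1, by omega⟩
    have hq : 225*(2*u+1)^2 ≤ 169*(3*m+1) := by
      zify at hB ⊢
      have e1 : (1125:ℤ)*((u:ℤ)+1+1)^2 = 1125*(u:ℤ)^2 + 4500*(u:ℤ) + 4500 := by ring
      have e2 : (225:ℤ)*(2*(u:ℤ)+1)^2 = 900*(u:ℤ)^2 + 900*(u:ℤ) + 225 := by ring
      have hu2 : (0:ℤ) ≤ (u:ℤ)^2 := sq_nonneg _
      have hu : (0:ℤ) ≤ (u:ℤ) := Int.ofNat_nonneg u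
      linarith [hB, e1, e2, hu2, hu]
    have hlin : 15*(2*u+1)*C ≤ 13*4^m := by
      have l2 := cb_sq_upper m
      have key : (3*m+1) * ((15*(2*u+1)*C)^2) ≤ (3*m+1) * ((13*4^m)^2) := by
        calc (3*m+1) * ((15*(2*u+1)*C)^2) = 225*(2*u+1)^2 * ((3*m+1) * C^2) := by ring
          _ ≤ 225*(2*u+1)^2 * 16^m := Nat.mul_le_mul_left _ l2
          _ ≤ 169*(3*m+1) * 16^m := Nat.mul_le_mul_right _ hq
          _ = (3*m+1) * (169 * 16^m) := by ring
          _ = (3*m+1) * ((13*4^m)^2) := by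
              congr 1
              rw [show (13*4^m)^2 = 169 * (4^m)^2 by ring, ← pow_mul, mul_comm m 2, pow_mul]
              norm_num
      have hsq := Nat.le_of_mul_le_mul_left key (by positivity)
      exact (Nat.pow_le_pow_iff_left two_ne_zero).1 hsq
    -- sum decomposition
    have hico1 : Icc (m + (u+1)) (2*m) = Ico (m + (u+1)) (2*m+1) := (Finset.Ico_add_one_right_eq_Icc _ _).symm
    have hico2 : Icc (m + 1) (2*m) = Ico (m + 1) (2*m+1) := (Finset.Ico_add_one_right_eq_Icc _ _).symm
    have hsplit : (∑ j ∈ Ico (m+1) (m+(u+1)), (2*m).choose j)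
        + (∑ j ∈ Ico (m+(u+1)) (2*m+1), (2*m).choose j)
        = ∑ j ∈ Ico (m+1) (2*m+1), (2*m).choose j :=
      Finset.sum_Ico_consecutive _ (by omega) (by omega)
    have hS2 : (∑ j ∈ Ico (m+1) (m+(u+1)), (2*m).choose j) ≤ u * C := by
      have h := Finset.sum_le_card_nsmul (Ico (m+1) (m+(u+1))) (fun j => (2*m).choose j) C (by
        intro j hj
        have := Nat.choose_le_middle j (2*m)
        rwa [show 2*m/2 = m by omega] at this)
      rwa [Nat.card_Ico, show m+(u+1) - (m+1) = u by omega, smul_eq_mul] at h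
    have hsym := sum_sym m
    rw [hico2] at hsym
    -- real versions
    have hEle1 : E ≤ 1 := by
      rw [hE, Real.exp_le_one_iff]
      apply div_nonpos_of_nonpos_of_nonneg _ (le_of_lt hmR)
      have h0 : (0:ℝ) ≤ 2 * (((2*(u+1) : ℕ)):ℝ)^2 := by positivity
      linarith
    have hfinal : (1/15 : ℝ) ≤ ((∑ j ∈ Icc (m + (u+1)) (2*m), (2*m).choose j : ℕ) : ℝ) / 4^m := by
      rw [le_div_iff₀ (by positivity), hico1]
      have c1 : ((∑ j ∈ Ico (m+1) (m+(u+1)), (2*m).choose j : ℕ) : ℝ)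
          + ((∑ j ∈ Ico (m+(u+1)) (2*m+1), (2*m).choose j : ℕ) : ℝ)
          = ((∑ j ∈ Ico (m+1) (2*m+1), (2*m).choose j : ℕ) : ℝ) := by exact_mod_cast hsplit
      have c2 : ((∑ j ∈ Ico (m+1) (m+(u+1)), (2*m).choose j : ℕ) : ℝ) ≤ (u:ℝ) * (C:ℝ) := by
        exact_mod_cast hS2
      have c3 : 2 * ((∑ j ∈ Ico (m+1) (2*m+1), (2*m).choose j : ℕ) : ℝ) + (C:ℝ) = 4^m := by
        exact_mod_cast hsym
      have c4 : 15*(2*(u:ℝ)+1)*(C:ℝ) ≤ 13*4^m := by exact_mod_cast hlin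
      linarith
    calc (1/15 : ℝ) * E ≤ (1/15 : ℝ) * 1 := by
          apply mul_le_mul_of_nonneg_left hEle1 (by norm_num)
      _ = 1/15 := by ring
      _ ≤ _ := by rw [hsum_cast]; exact hfinal
end

section
/- Let m and s be integers with m ≥ 6 and 2 ≤ s ≤ m/2, and set f = ⌊m/3⌋ + 1. Then 2f · C(m, s) > m · (1 + C(m−1, s−1) − C(m−s, s−1)). -/
/-- Let `m ≥ 6`, `2 ≤ s ≤ m/2`, and `f = ⌊m/3⌋ + 1`. Then
`2f · C(m, s) > m · (1 + C(m−1, s−1) − C(m−s, s−1))`. -/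
theorem stmt_7 (m s : ℕ) (hm : 6 ≤ m) (hs2 : 2 ≤ s) (hsm : 2 * s ≤ m) :
    (m : ℤ) * (1 + ((m - 1).choose (s - 1) : ℤ) - ((m - s).choose (s - 1) : ℤ)) <
      2 * ((m / 3 + 1 : ℕ) : ℤ) * (m.choose s : ℤ) := by
  have hB : 1 ≤ (m - s).choose (s - 1) := Nat.choose_pos (by omega)
  have hC : 1 ≤ m.choose s := Nat.choose_pos (by omega)
  have h1 : m * (m - 1).choose (s - 1) = m.choose s * s := by
    obtain ⟨m', rfl⟩ : ∃ m', m = m' + 1 := ⟨m - 1, by omega⟩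
    obtain ⟨s', rfl⟩ : ∃ s', s = s' + 1 := ⟨s - 1, by omega⟩
    simpa using Nat.add_one_mul_choose_eq m' s'
  have hs : s < 2 * (m / 3 + 1) := by omega
  have h1' : (m : ℤ) * ((m - 1).choose (s - 1) : ℤ) = (m.choose s : ℤ) * s := by
    exact_mod_cast h1
  have hB' : (1 : ℤ) ≤ ((m - s).choose (s - 1) : ℤ) := by exact_mod_cast hB
  have hC' : (1 : ℤ) ≤ (m.choose s : ℤ) := by exact_mod_cast hC
  have hs' : (s : ℤ) < 2 * ((m / 3 + 1 : ℕ) : ℤ) := by exact_mod_cast hs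
  have hm' : (6 : ℤ) ≤ (m : ℤ) := by exact_mod_cast hm
  nlinarith [mul_le_mul_of_nonneg_left hB' (by linarith : (0:ℤ) ≤ (m:ℤ)),
    mul_le_mul_of_nonneg_right (le_of_lt hs') (by linarith : (0:ℤ) ≤ (m.choose s : ℤ)),
    mul_lt_mul_of_pos_right hs' (by linarith : (0:ℤ) < (m.choose s : ℤ))]
end

section
/- There exists m₀ such that for all integers m ≥ m₀ the following holds. Set f = ⌊m/3⌋ + 1 and let s be an integer with f ≤ s ≤ m/2. For any two functions F_A and F_B, each assigning to every s-element subset I of {1,…,m} a subset F_A(I) ⊆ I (respectively F_B(I) ⊆ I) with |F_A(I)| ≥ f (respectively |F_B(I)| ≥ f), there exist s-element subsets I₁, I₂ of {1,…,m} and an index σ ∈ {1,…,m} such that I₁ ∩ I₂ = {σ}, σ ∈ F_A(I₁), and σ ∈ F_B(I₂). -/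
/-- For all sufficiently large `m`, with `f = ⌊m/3⌋ + 1` and any `s` with
`f ≤ s ≤ m/2`: for any two functions `F_A`, `F_B` assigning to every `s`-element subset `I` of
`{1,…,m}` a subset of `I` of size at least `f`, there exist `s`-element subsets `I₁, I₂` and
an index `σ` with `I₁ ∩ I₂ = {σ}`, `σ ∈ F_A(I₁)`, and `σ ∈ F_B(I₂)`. -/
theorem stmt_8 :
    ∃ m₀ : ℕ, ∀ m : ℕ, m₀ ≤ m →
      ∀ s : ℕ, m / 3 + 1 ≤ s → 2 * s ≤ m →
        ∀ F_A F_B : Finset (Fin m) → Finset (Fin m),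
          (∀ I : Finset (Fin m), I.card = s → F_A I ⊆ I ∧ m / 3 + 1 ≤ (F_A I).card) →
          (∀ I : Finset (Fin m), I.card = s → F_B I ⊆ I ∧ m / 3 + 1 ≤ (F_B I).card) →
          ∃ (I₁ I₂ : Finset (Fin m)) (σ : Fin m),
            I₁.card = s ∧ I₂.card = s ∧ I₁ ∩ I₂ = {σ} ∧ σ ∈ F_A I₁ ∧ σ ∈ F_B I₂ := by
  use 1
  intro m hm s hfs hsm F_A F_B hA hB
  have hs1 : 1 ≤ s := by omega
  -- a set U of size 2s-1
  obtain ⟨U, -, hUcard⟩ :=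
    Finset.exists_subset_card_eq (s := (Finset.univ : Finset (Fin m))) (n := 2 * s - 1)
      (by simp [Finset.card_univ]; omega)
  set P := U.powersetCard s with hP
  have hmemP : ∀ I ∈ P, I ⊆ U ∧ I.card = s := fun I hI => Finset.mem_powersetCard.mp hI
  have hPne : P.Nonempty := by
    rw [hP, Finset.powersetCard_nonempty]
    omega
  -- the involution
  let φ : (Σ _ : Finset (Fin m), Fin m) → (Σ _ : Finset (Fin m), Fin m) :=
    fun p => ⟨insert p.2 (U \ p.1), p.2⟩
  set T := P.sigma (fun I => (I : Finset (Fin m))) with hT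
  set TA := P.sigma (fun I => F_A I) with hTA
  set TB := P.sigma (fun I => F_B I) with hTB
  set B := TB.image φ with hBdef
  -- subsets of T
  have hTAsub : TA ⊆ T := by
    intro p hp
    rw [hTA, Finset.mem_sigma] at hp
    rw [hT, Finset.mem_sigma]
    exact ⟨hp.1, (hA p.1 (hmemP p.1 hp.1).2).1 hp.2⟩
  have hBsub : B ⊆ T := by
    intro p hp
    rw [hBdef, Finset.mem_image] at hp
    obtain ⟨q, hq, rfl⟩ := hp
    rw [hTB, Finset.mem_sigma] at hq
    obtain ⟨hq1, hq2⟩ := hq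
    obtain ⟨hq1sub, hq1card⟩ := hmemP q.1 hq1
    have hσI : q.2 ∈ q.1 := (hB q.1 hq1card).1 hq2
    have hσU : q.2 ∈ U := hq1sub hσI
    have hnot : q.2 ∉ U \ q.1 := by simp [hσI]
    rw [hT, Finset.mem_sigma]
    constructor
    · rw [hP, Finset.mem_powersetCard]
      constructor
      · intro x hx
        simp only [φ, Finset.mem_insert, Finset.mem_sdiff] at hx
        rcases hx with rfl | hx
        · exact hσU
        · exact hx.1
      · rw [Finset.card_insert_of_notMem hnot, Finset.card_sdiff_of_subset hq1sub, hUcard, hq1card]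
        omega
    · simp [φ]
  -- cardinalities
  have hcardT : T.card = P.card * s := by
    rw [hT, Finset.card_sigma]
    rw [Finset.sum_congr rfl (fun I hI => (hmemP I hI).2)]
    simp [mul_comm]
  have hcardTA : P.card * (m / 3 + 1) ≤ TA.card := by
    rw [hTA, Finset.card_sigma]
    calc P.card * (m / 3 + 1) = ∑ _I ∈ P, (m / 3 + 1) := by simp [mul_comm]
    _ ≤ ∑ I ∈ P, (F_A I).card :=
        Finset.sum_le_sum (fun I hI => (hA I (hmemP I hI).2).2)
  have hcardTB : P.card * (m / 3 + 1) ≤ TB.card := by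
    rw [hTB, Finset.card_sigma]
    calc P.card * (m / 3 + 1) = ∑ _I ∈ P, (m / 3 + 1) := by simp [mul_comm]
    _ ≤ ∑ I ∈ P, (F_B I).card :=
        Finset.sum_le_sum (fun I hI => (hB I (hmemP I hI).2).2)
  -- φ is injective on TB
  have hinj : Set.InjOn φ TB := by
    rintro ⟨pI, pσ⟩ hp ⟨qI, qσ⟩ hq hpq
    rw [hTB, Finset.coe_sigma] at hp hq
    simp only [Set.mem_sigma_iff, Finset.mem_coe] at hp hq
    obtain ⟨hp1, hp2⟩ := hp
    obtain ⟨hq1, hq2⟩ := hq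
    simp only [φ, Sigma.mk.inj_iff, heq_eq_eq] at hpq
    obtain ⟨h1, h2⟩ := hpq
    subst h2
    have hp2' : pσ ∈ pI := (hB pI (hmemP pI hp1).2).1 hp2
    have hq2' : pσ ∈ qI := (hB qI (hmemP qI hq1).2).1 hq2
    have hps : pσ ∉ U \ pI := by simp [hp2']
    have hqs : pσ ∉ U \ qI := by simp [hq2']
    have hsd : U \ pI = U \ qI := by
      have := congrArg (Finset.erase · pσ) h1
      simpa [Finset.erase_insert, hps, hqs] using this
    have hpeq : pI = qI := by
      have h1' := congrArg (U \ ·) hsd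
      simpa [sdiff_sdiff_right_self, Finset.inf_eq_inter,
        Finset.inter_eq_right.mpr (hmemP pI hp1).1,
        Finset.inter_eq_right.mpr (hmemP qI hq1).1] using h1'
    simp [hpeq]
  have hcardB : TB.card = B.card := (Finset.card_image_of_injOn hinj).symm
  -- There must be a common element
  have hnd : ¬ Disjoint TA B := by
    intro hdisj
    have hun : (TA ∪ B).card = TA.card + B.card := Finset.card_union_of_disjoint hdisj
    have hle : (TA ∪ B).card ≤ T.card := Finset.card_le_card (Finset.union_subset hTAsub hBsub)
    have h2f : s < 2 * (m / 3 + 1) := by omega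
    have hP1 : 1 ≤ P.card := Finset.card_pos.mpr hPne
    nlinarith [hcardTA, hcardTB, hcardB, hcardT]
  rw [Finset.not_disjoint_iff] at hnd
  obtain ⟨p, hpA, hpB⟩ := hnd
  rw [hTA, Finset.mem_sigma] at hpA
  rw [hBdef, Finset.mem_image] at hpB
  obtain ⟨q, hq, hφq⟩ := hpB
  rw [hTB, Finset.mem_sigma] at hq
  obtain ⟨hq1, hq2⟩ := hq
  obtain ⟨I₁, σ⟩ := p
  obtain ⟨I₂, σ₂⟩ := q
  simp only [φ, Sigma.mk.inj_iff, heq_eq_eq] at hφq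
  obtain ⟨hI₁eq, rfl⟩ := hφq
  obtain ⟨hpA1, hpA2⟩ := hpA
  obtain ⟨hI₂sub, hI₂card⟩ := hmemP I₂ hq1
  have hσI₂ : σ₂ ∈ I₂ := (hB I₂ hI₂card).1 hq2
  have hnot : σ₂ ∉ U \ I₂ := by simp [hσI₂]
  refine ⟨I₁, I₂, σ₂, (hmemP I₁ hpA1).2, hI₂card, ?_, hpA2, hq2⟩
  rw [← hI₁eq]
  ext x
  simp only [Finset.mem_inter, Finset.mem_insert, Finset.mem_sdiff, Finset.mem_singleton]
  constructor
  · rintro ⟨rfl | ⟨-, hx⟩, hx2⟩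
    · rfl
    · exact absurd hx2 hx
  · rintro rfl
    exact ⟨Or.inl rfl, hσI₂⟩
end

section
/- For every sufficiently large positive integer m the following holds. Set f = ⌊m/3⌋ + 1, let C be an integer with 0 ≤ C ≤ ⌊m/6⌋ − 1, and let s = C + f. Then there is no deterministic simultaneous one-way protocol solving UniqueOverlap_{m,s} in which Alice and Bob each send a message from a set of size at most 2^C. Formally: there do not exist functions m_A, m_B mapping vectors in {0,1,⊥}^m to a message set of size at most 2^C, and a function g mapping a pair of messages together with a pair of subsets of {1,…,m} to {yes, no}, such that for every valid instance (X, Y) of UniqueOverlap_{m,s} with unique common support index σ, g(m_A(X), m_B(Y), supp(X), supp(Y)) = yes if and only if X_σ = 0 and Y_σ = 1. -/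
/-- The support of a ternary vector `Z ∈ {0,1,⊥}^m` (encoded as `Fin m → Option Bool`,
with `⊥ = none`): the set of coordinates where `Z` is not `⊥`. -/
def UOsupp {m : ℕ} (Z : Fin m → Option Bool) : Finset (Fin m) :=
  Finset.univ.filter (fun i => Z i ≠ none)

/-- `(X, Y)` is a valid instance of `UniqueOverlap_{m,s}` with unique common support index
`σ`: both supports have size `s`, at index `σ` both entries are bits whose XOR is `1`, and
at every other index at least one of the entries is `⊥`. -/
def UOValid (m s : ℕ) (X Y : Fin m → Option Bool) (σ : Fin m) : Prop :=
  (UOsupp X).card = s ∧ (UOsupp Y).card = s ∧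
  (∃ a b : Bool, X σ = some a ∧ Y σ = some b ∧ xor a b = true) ∧
  (∀ i : Fin m, i ≠ σ → X i = none ∨ Y i = none)

namespace Stmt9Aux

/-- input with support `S` and bit-values `v`. -/
def inp {m : ℕ} (S : Finset (Fin m)) (v : Fin m → Bool) : Fin m → Option Bool :=
  fun i => if i ∈ S then some (v i) else none

lemma UOsupp_inp {m : ℕ} (S : Finset (Fin m)) (v : Fin m → Bool) : UOsupp (inp S v) = S := by
  ext i
  by_cases h : i ∈ S <;> simp [UOsupp, inp, h]

/-- coordinates of `S` whose value is determined by the message. -/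
def badset {m C : ℕ} (S : Finset (Fin m)) (h : (Fin m → Option Bool) → Fin (2 ^ C)) :
    Finset (Fin m) :=
  S.filter (fun σ => ∀ v w : Fin m → Bool, h (inp S v) = h (inp S w) → v σ = w σ)

lemma badset_card_le {m C : ℕ} (S : Finset (Fin m))
    (h : (Fin m → Option Bool) → Fin (2 ^ C)) : (badset S h).card ≤ C := by
  by_contra hlt
  push_neg at hlt
  set D := badset S h with hD
  have hinj : Function.Injective
      (fun u : (↥D → Bool) => h (inp S (fun i => if hd : i ∈ D then u ⟨i, hd⟩ else false))) := by
    intro u u' he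
    funext ⟨i, hi⟩
    have hb : ∀ v w : Fin m → Bool, h (inp S v) = h (inp S w) → v i = w i :=
      (Finset.mem_filter.mp hi).2
    have := hb _ _ he
    simpa [hi] using this
  have hcard := Fintype.card_le_of_injective _ hinj
  simp [Fintype.card_fun, Fintype.card_coe] at hcard
  have := (Nat.pow_le_pow_iff_right (by norm_num : 1 < 2)).mp hcard
  omega

end Stmt9Aux

namespace Stmt9Aux

lemma exists_good {m C : ℕ} (T : Finset (Fin m)) (hT : T.card = 4 * C + 1)
    (SX SY : Finset (Fin m) → Finset (Fin m))
    (mA mB : (Fin m → Option Bool) → Fin (2 ^ C)) :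
    ∃ F ∈ T.powersetCard (2 * C + 1), ∃ σ ∈ F,
      σ ∉ badset (SX F) mA ∧ σ ∉ badset (SY (insert σ (T \ F))) mB := by
  by_contra hcon
  push_neg at hcon
  set pc := T.powersetCard (2 * C + 1) with hpc
  -- per-F inequality
  have hper : ∀ F ∈ pc, 2 * C + 1 ≤ C +
      (F.filter (fun σ => σ ∈ badset (SY (insert σ (T \ F))) mB)).card := by
    intro F hF
    have hFcard : F.card = 2 * C + 1 := (Finset.mem_powersetCard.mp hF).2
    have hsub : F ⊆ F.filter (fun σ => σ ∈ badset (SX F) mA) ∪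
        F.filter (fun σ => σ ∈ badset (SY (insert σ (T \ F))) mB) := by
      intro σ hσ
      by_cases hA : σ ∈ badset (SX F) mA
      · exact Finset.mem_union_left _ (Finset.mem_filter.mpr ⟨hσ, hA⟩)
      · exact Finset.mem_union_right _ (Finset.mem_filter.mpr ⟨hσ, hcon F hF σ hσ hA⟩)
    have h1 : (F.filter (fun σ => σ ∈ badset (SX F) mA)).card ≤ C := by
      refine le_trans (Finset.card_le_card ?_) (badset_card_le (SX F) mA)
      intro σ hσ; exact (Finset.mem_filter.mp hσ).2
    calc 2 * C + 1 = F.card := hFcard.symm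
      _ ≤ _ := le_trans (Finset.card_le_card hsub) (Finset.card_union_le _ _)
      _ ≤ C + _ := by omega
  -- sum over all F
  have hsum1 : pc.card * (2 * C + 1) ≤ pc.card * C +
      ∑ F ∈ pc, (F.filter (fun σ => σ ∈ badset (SY (insert σ (T \ F))) mB)).card := by
    calc pc.card * (2 * C + 1) = ∑ _F ∈ pc, (2 * C + 1) := by
          rw [Finset.sum_const, smul_eq_mul, mul_comm]
      _ ≤ ∑ F ∈ pc, (C +
          (F.filter (fun σ => σ ∈ badset (SY (insert σ (T \ F))) mB)).card) :=
          Finset.sum_le_sum hper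
      _ = _ := by rw [Finset.sum_add_distrib, Finset.sum_const, smul_eq_mul, mul_comm]
  -- reindexing bound for the B-part
  have hsum2 : ∑ F ∈ pc, (F.filter (fun σ => σ ∈ badset (SY (insert σ (T \ F))) mB)).card
      ≤ pc.card * C := by
    rw [← Finset.card_sigma]
    have hle : (pc.sigma (fun F => F.filter
          (fun σ => σ ∈ badset (SY (insert σ (T \ F))) mB))).card ≤
        (pc.sigma (fun G => G.filter (fun σ => σ ∈ badset (SY G) mB))).card := by
      apply Finset.card_le_card_of_injOn (fun q => ⟨insert q.2 (T \ q.1), q.2⟩)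
      · rintro ⟨F, σ⟩ hq
        simp only [Finset.mem_coe] at hq ⊢
        rw [Finset.mem_sigma] at hq ⊢
        obtain ⟨hF, hσ⟩ := hq
        rw [Finset.mem_filter] at hσ
        obtain ⟨hσF, hσB⟩ := hσ
        obtain ⟨hFT, hFcard⟩ := Finset.mem_powersetCard.mp hF
        constructor
        · rw [hpc, Finset.mem_powersetCard]
          constructor
          · intro x hx
            rcases Finset.mem_insert.mp hx with h | h
            · exact hFT (h ▸ hσF)
            · exact (Finset.mem_sdiff.mp h).1
          · rw [Finset.card_insert_of_notMem (fun h => (Finset.mem_sdiff.mp h).2 hσF),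
              Finset.card_sdiff_of_subset hFT, hT, hFcard]
            omega
        · exact Finset.mem_filter.mpr ⟨Finset.mem_insert_self _ _, hσB⟩
      · rintro ⟨F, σ⟩ hq ⟨F', σ'⟩ hq' heq
        rw [Finset.mem_coe, Finset.mem_sigma] at hq hq'
        obtain ⟨hF, hσ⟩ := hq
        obtain ⟨hF', hσ'⟩ := hq'
        have hσF : σ ∈ F := (Finset.mem_filter.mp hσ).1
        have hσF' : σ' ∈ F' := (Finset.mem_filter.mp hσ').1
        have hFT : F ⊆ T := (Finset.mem_powersetCard.mp hF).1
        have hFT' : F' ⊆ T := (Finset.mem_powersetCard.mp hF').1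
        obtain ⟨h1, h2⟩ := Sigma.mk.inj_iff.mp heq
        have h2' : σ = σ' := by exact eq_of_heq h2
        subst h2'
        have h3 : T \ F = T \ F' := by
          have e1 : (insert σ (T \ F)).erase σ = T \ F :=
            Finset.erase_insert (fun h => (Finset.mem_sdiff.mp h).2 hσF)
          have e2 : (insert σ (T \ F')).erase σ = T \ F' :=
            Finset.erase_insert (fun h => (Finset.mem_sdiff.mp h).2 hσF')
          rw [← e1, ← e2, h1]
        have : F = F' := by
          have := congrArg (fun S => T \ S) h3
          simpa [sdiff_sdiff_right_self, Finset.inf_eq_inter,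
            Finset.inter_eq_right.mpr hFT, Finset.inter_eq_right.mpr hFT'] using this
        subst this; rfl
    refine le_trans hle ?_
    rw [Finset.card_sigma]
    calc ∑ G ∈ pc, (G.filter (fun σ => σ ∈ badset (SY G) mB)).card
        ≤ ∑ _G ∈ pc, C := by
          apply Finset.sum_le_sum
          intro G _
          refine le_trans (Finset.card_le_card ?_) (badset_card_le (SY G) mB)
          intro σ hσ; exact (Finset.mem_filter.mp hσ).2
      _ = pc.card * C := by rw [Finset.sum_const, smul_eq_mul]
  have hne : pc.Nonempty := by
    rw [hpc]
    apply Finset.powersetCard_nonempty.mpr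
    omega
  have hpos : 1 ≤ pc.card := Finset.card_pos.mpr hne
  nlinarith [hsum1, hsum2, hpos]

end Stmt9Aux

open Stmt9Aux

/-- For all sufficiently large `m`, with `f = ⌊m/3⌋ + 1`, any `C` with
`0 ≤ C ≤ ⌊m/6⌋ − 1`, and `s = C + f`: there is no deterministic simultaneous one-way
protocol solving `UniqueOverlap_{m,s}` in which Alice and Bob each send a message from a
set of size at most `2^C`. -/
theorem stmt_9 :
    ∃ m₀ : ℕ, ∀ m : ℕ, m₀ ≤ m →
      ∀ C : ℕ, C + 1 ≤ m / 6 →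
        ¬ ∃ (mA mB : (Fin m → Option Bool) → Fin (2 ^ C))
            (g : Fin (2 ^ C) → Fin (2 ^ C) → Finset (Fin m) → Finset (Fin m) → Bool),
            ∀ (X Y : Fin m → Option Bool) (σ : Fin m),
              UOValid m (C + (m / 3 + 1)) X Y σ →
              (g (mA X) (mB Y) (UOsupp X) (UOsupp Y) = true ↔
                (X σ = some false ∧ Y σ = some true)) := by
  refine ⟨0, fun m _ C hC => ?_⟩
  rintro ⟨mA, mB, g, hg⟩
  set s := C + (m / 3 + 1) with hs
  set p := s - (2 * C + 1) with hp
  have hs1 : 2 * C + 1 ≤ s := by omega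
  have hm2s : 4 * C + 1 + 2 * p ≤ m := by omega
  -- the three blocks of coordinates
  let T : Finset (Fin m) := (Finset.range (4 * C + 1)).attachFin
    (fun x hx => by rw [Finset.mem_range] at hx; omega)
  let P : Finset (Fin m) := (Finset.Ico (4 * C + 1) (4 * C + 1 + p)).attachFin
    (fun x hx => by rw [Finset.mem_Ico] at hx; omega)
  let Q : Finset (Fin m) := (Finset.Ico (4 * C + 1 + p) (4 * C + 1 + 2 * p)).attachFin
    (fun x hx => by rw [Finset.mem_Ico] at hx; omega)
  have hTmem : ∀ i : Fin m, i ∈ T ↔ (i : ℕ) < 4 * C + 1 := fun i => by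
    simp [T, Finset.mem_attachFin]
  have hPmem : ∀ i : Fin m, i ∈ P ↔ (4 * C + 1 ≤ (i : ℕ) ∧ (i : ℕ) < 4 * C + 1 + p) :=
    fun i => by simp [P, Finset.mem_attachFin]
  have hQmem : ∀ i : Fin m,
      i ∈ Q ↔ (4 * C + 1 + p ≤ (i : ℕ) ∧ (i : ℕ) < 4 * C + 1 + 2 * p) :=
    fun i => by simp [Q, Finset.mem_attachFin]
  have hTcard : T.card = 4 * C + 1 := by simp [T, Finset.card_attachFin]
  have hPcard : P.card = p := by simp [P, Finset.card_attachFin]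
  have hQcard : Q.card = p := by simp [Q, Finset.card_attachFin]; omega
  obtain ⟨F, hF, σ, hσF, hA, hB⟩ :=
    exists_good T hTcard (fun F => F ∪ P) (fun G => G ∪ Q) mA mB
  obtain ⟨hFT, hFcard⟩ := Finset.mem_powersetCard.mp hF
  set Gm : Finset (Fin m) := insert σ (T \ F) with hGm
  have hσT : σ ∈ T := hFT hσF
  have hGmT : Gm ⊆ T := by
    intro x hx
    rcases Finset.mem_insert.mp hx with h | h
    · exact h ▸ hσT
    · exact (Finset.mem_sdiff.mp h).1
  have hGmcard : Gm.card = 2 * C + 1 := by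
    rw [hGm, Finset.card_insert_of_notMem (fun h => (Finset.mem_sdiff.mp h).2 hσF),
      Finset.card_sdiff_of_subset hFT, hTcard, hFcard]
    omega
  have hSXcard : (F ∪ P).card = s := by
    rw [Finset.card_union_of_disjoint, hFcard, hPcard]
    · omega
    · rw [Finset.disjoint_left]
      intro i hiF hiP
      have h1 := (hTmem i).mp (hFT hiF)
      have h2 := (hPmem i).mp hiP
      omega
  have hSYcard : (Gm ∪ Q).card = s := by
    rw [Finset.card_union_of_disjoint, hGmcard, hQcard]
    · omega
    · rw [Finset.disjoint_left]
      intro i hiG hiQ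
      have h1 := (hTmem i).mp (hGmT hiG)
      have h2 := (hQmem i).mp hiQ
      omega
  have hσSX : σ ∈ F ∪ P := Finset.mem_union_left _ hσF
  have hσSY : σ ∈ Gm ∪ Q := Finset.mem_union_left _ (Finset.mem_insert_self _ _)
  -- extract flips
  have hA' : ∃ v w : Fin m → Bool, mA (inp (F ∪ P) v) = mA (inp (F ∪ P) w) ∧
      v σ = false ∧ w σ = true := by
    rw [badset, Finset.mem_filter] at hA
    push_neg at hA
    obtain ⟨v, w, hvw, hne⟩ := hA hσSX
    cases hb : v σ <;> cases hb' : w σ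
    · exact absurd (hb.trans hb'.symm) hne
    · exact ⟨v, w, hvw, hb, hb'⟩
    · exact ⟨w, v, hvw.symm, hb', hb⟩
    · exact absurd (hb.trans hb'.symm) hne
  have hB' : ∃ y z : Fin m → Bool, mB (inp (Gm ∪ Q) y) = mB (inp (Gm ∪ Q) z) ∧
      y σ = true ∧ z σ = false := by
    rw [badset, Finset.mem_filter] at hB
    push_neg at hB
    obtain ⟨y, z, hyz, hne⟩ := hB hσSY
    cases hb : y σ <;> cases hb' : z σ
    · exact absurd (hb.trans hb'.symm) hne
    · exact ⟨z, y, hyz.symm, hb', hb⟩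
    · exact ⟨y, z, hyz, hb, hb'⟩
    · exact absurd (hb.trans hb'.symm) hne
  obtain ⟨v, w, hmsgA, hv, hw⟩ := hA'
  obtain ⟨y, z, hmsgB, hy, hz⟩ := hB'
  -- validity of the constructed instances
  have hvalid : ∀ v' y' : Fin m → Bool, xor (v' σ) (y' σ) = true →
      UOValid m s (inp (F ∪ P) v') (inp (Gm ∪ Q) y') σ := by
    intro v' y' hxor
    refine ⟨?_, ?_, ⟨v' σ, y' σ, ?_, ?_, hxor⟩, ?_⟩
    · rw [UOsupp_inp]; exact hSXcard
    · rw [UOsupp_inp]; exact hSYcard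
    · simp [inp, hσSX]
    · simp [inp, hσSY]
    · intro i hi
      by_cases h1 : i ∈ F ∪ P
      · by_cases h2 : i ∈ Gm ∪ Q
        · exfalso
          rcases Finset.mem_union.mp h1 with hF1 | hP1
          · rcases Finset.mem_union.mp h2 with hG1 | hQ1
            · rcases Finset.mem_insert.mp hG1 with he | hd
              · exact hi he
              · exact (Finset.mem_sdiff.mp hd).2 hF1
            · have := (hTmem i).mp (hFT hF1)
              have := (hQmem i).mp hQ1
              omega
          · have hiP := (hPmem i).mp hP1
            rcases Finset.mem_union.mp h2 with hG1 | hQ1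
            · have := (hTmem i).mp (hGmT hG1)
              omega
            · have := (hQmem i).mp hQ1
              omega
        · right; simp [inp, h2]
      · left; simp [inp, h1]
  have hval1 := hvalid v y (by rw [hv, hy]; rfl)
  have hval2 := hvalid w z (by rw [hw, hz]; rfl)
  have h1 := (hg _ _ σ hval1).mpr ⟨by simp [inp, hσSX, hv], by simp [inp, hσSY, hy]⟩
  have h2 := (hg _ _ σ hval2)
  rw [UOsupp_inp, UOsupp_inp] at h1 h2
  rw [hmsgA, hmsgB] at h1
  have h3 := h2.mp h1
  simp [inp, hσSX, hw] at h3
end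

section
/- Let m and s be positive integers with ⌈m/3⌉ < s ≤ ⌈m/2⌉. Then there exists a deterministic simultaneous one-way protocol for UniqueOverlap_{m,s} in which Alice and Bob each send at most s − 1 bits: there exist functions m_A, m_B mapping vectors in {0,1,⊥}^m to binary strings of length s − 1, and a function g mapping a pair of such strings together with a pair of subsets of {1,…,m} to {yes, no}, such that for every valid instance (X, Y) of UniqueOverlap_{m,s} with unique common support index σ, g(m_A(X), m_B(Y), supp(X), supp(Y)) = yes if and only if X_σ = 0 and Y_σ = 1. -/
/-- Partner function: pairs up each coordinate with another coordinate in its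
triple `{3t, 3t+1, 3t+2}` (with a boundary fix at the top). -/
def UOp (m i : ℕ) : ℕ := if i % 3 = 2 then i - 2 else if i + 1 < m then i + 1 else i - 1

/-- Pick an element of `S` whose partner is also in `S` (junk value if none exists). -/
noncomputable def UOpick (m : ℕ) (hm : 0 < m) (S : Finset (Fin m)) : Fin m :=
  if h : ∃ σ ∈ S, ∃ τ ∈ S, τ ≠ σ ∧ (τ : ℕ) = UOp m σ then h.choose else ⟨0, hm⟩

lemma UOpick_spec (m s : ℕ) (hm : 0 < m) (h1 : (m + 2) / 3 < s)
    (S : Finset (Fin m)) (hS : S.card = s) :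
    UOpick m hm S ∈ S ∧
      ∃ τ ∈ S, τ ≠ UOpick m hm S ∧ (τ : ℕ) = UOp m (UOpick m hm S) := by
  have hex : ∃ σ ∈ S, ∃ τ ∈ S, τ ≠ σ ∧ (τ : ℕ) = UOp m σ := by
    by_contra hc
    push_neg at hc
    have hinj : Set.InjOn (fun i : Fin m => (i : ℕ) / 3) S := by
      intro i hi j hj hij
      by_contra hne
      have h3 : (i : ℕ) ≠ (j : ℕ) := fun h => hne (Fin.ext h)
      have hd : UOp m i = (j : ℕ) ∨ UOp m j = (i : ℕ) := by
        have hi3 : (i : ℕ) < m := i.isLt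
        have hj3 : (j : ℕ) < m := j.isLt
        simp only [Set.mem_setOf_eq] at hij
        unfold UOp
        split_ifs <;> omega
      rcases hd with h' | h'
      · exact hc i hi j hj (fun he => h3 (congrArg Fin.val he).symm) h'.symm
      · exact hc j hj i hi (fun he => h3 (congrArg Fin.val he)) h'.symm
    have hcard : S.card ≤ (Finset.range ((m + 2) / 3)).card := by
      apply Finset.card_le_card_of_injOn (fun i : Fin m => (i : ℕ) / 3)
      · intro x hx
        simp only [Finset.coe_range, Set.mem_Iio]
        have := x.isLt
        omega
      · exact hinj
    rw [Finset.card_range, hS] at hcard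
    omega
  simp only [UOpick, dif_pos hex]
  exact ⟨hex.choose_spec.1, hex.choose_spec.2⟩

/-- Alice's / Bob's message: the values of `Z` on its support, sorted, with the picked
coordinate omitted. -/
noncomputable def UOmsg (m s : ℕ) (hm : 0 < m) (Z : Fin m → Option Bool) :
    Fin (s - 1) → Bool := fun j =>
  (Z ((((UOsupp Z).erase (UOpick m hm (UOsupp Z))).sort (· ≤ ·)).getD j ⟨0, hm⟩)).getD false

/-- Decode the value at coordinate `i` from a message with support `S`. -/
noncomputable def UOdec (m s : ℕ) (hm : 0 < m) (a : Fin (s - 1) → Bool)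
    (S : Finset (Fin m)) (i : Fin m) : Bool :=
  let L := (S.erase (UOpick m hm S)).sort (· ≤ ·)
  if h : L.idxOf i < s - 1 then a ⟨L.idxOf i, h⟩ else false

lemma UOdec_msg (m s : ℕ) (hm : 0 < m) (Z : Fin m → Option Bool)
    (hcard : (UOsupp Z).card = s) (hpick : UOpick m hm (UOsupp Z) ∈ UOsupp Z)
    (i : Fin m) (hi : i ∈ UOsupp Z) (hne : i ≠ UOpick m hm (UOsupp Z)) :
    UOdec m s hm (UOmsg m s hm Z) (UOsupp Z) i = (Z i).getD false := by
  set S := UOsupp Z with hSdef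
  set L := (S.erase (UOpick m hm S)).sort (· ≤ ·) with hL
  have hlen : L.length = s - 1 := by
    rw [hL, Finset.length_sort, Finset.card_erase_of_mem hpick, hcard]
  have hmem : i ∈ L := by
    rw [hL, Finset.mem_sort]
    exact Finset.mem_erase.mpr ⟨hne, hi⟩
  have hidx : L.idxOf i < L.length := List.idxOf_lt_length_iff.mpr hmem
  have hidx' : L.idxOf i < s - 1 := hlen ▸ hidx
  rw [UOdec]
  simp only [← hL, dif_pos hidx']
  rw [UOmsg]
  simp only [← hSdef, ← hL]
  rw [List.getD_eq_getElem L ⟨0, hm⟩ (by omega : (L.idxOf i : ℕ) < L.length)]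
  rw [List.getElem_idxOf hidx]

/-- If `⌈m/3⌉ < s ≤ ⌈m/2⌉`, then there is a deterministic simultaneous
one-way protocol for `UniqueOverlap_{m,s}` in which Alice and Bob each send at most `s − 1`
bits (messages are binary strings of length `s − 1`). -/
theorem stmt_10 (m s : ℕ) (hm : 0 < m) (hs : 0 < s)
    (h1 : (m + 2) / 3 < s) (h2 : s ≤ (m + 1) / 2) :
    ∃ (mA mB : (Fin m → Option Bool) → (Fin (s - 1) → Bool))
      (g : (Fin (s - 1) → Bool) → (Fin (s - 1) → Bool) →
            Finset (Fin m) → Finset (Fin m) → Bool),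
      ∀ (X Y : Fin m → Option Bool) (σ : Fin m),
        UOValid m s X Y σ →
        (g (mA X) (mB Y) (UOsupp X) (UOsupp Y) = true ↔
          (X σ = some false ∧ Y σ = some true)) := by
  classical
  refine ⟨UOmsg m s hm, UOmsg m s hm,
    fun a b S T =>
      if h : ∃ σ : Fin m, S ∩ T = {σ} then
        (if h.choose = UOpick m hm S then UOdec m s hm b T h.choose
          else !(UOdec m s hm a S h.choose))
      else false, ?_⟩
  rintro X Y σ ⟨hX, hY, ⟨a, b, hXσ, hYσ, hab⟩, hoth⟩
  have hmemX : σ ∈ UOsupp X := by simp [UOsupp, hXσ]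
  have hmemY : σ ∈ UOsupp Y := by simp [UOsupp, hYσ]
  have hST : UOsupp X ∩ UOsupp Y = {σ} := by
    ext i
    simp only [Finset.mem_inter, Finset.mem_singleton, UOsupp, Finset.mem_filter,
      Finset.mem_univ, true_and]
    constructor
    · rintro ⟨hx, hy⟩
      by_contra hne
      rcases hoth i hne with h | h
      · exact hx h
      · exact hy h
    · rintro rfl
      exact ⟨by simp [hXσ], by simp [hYσ]⟩
  have hex : ∃ σ' : Fin m, UOsupp X ∩ UOsupp Y = {σ'} := ⟨σ, hST⟩
  have hchoose : hex.choose = σ := by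
    have hsp := hex.choose_spec
    exact (Finset.singleton_injective (hST.symm.trans hsp)).symm
  obtain ⟨hpX, τX, hτXmem, hτXne, hτXval⟩ := UOpick_spec m s hm h1 _ hX
  obtain ⟨hpY, τY, hτYmem, hτYne, hτYval⟩ := UOpick_spec m s hm h1 _ hY
  beta_reduce
  rw [dif_pos hex]
  simp only [hchoose]
  by_cases hc : σ = UOpick m hm (UOsupp X)
  · rw [if_pos hc]
    have hcY : σ ≠ UOpick m hm (UOsupp Y) := by
      intro hc2
      have hττ : τX = τY := Fin.ext (by rw [hτXval, hτYval, ← hc, ← hc2])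
      have : τX ∈ UOsupp X ∩ UOsupp Y := Finset.mem_inter.mpr ⟨hτXmem, hττ ▸ hτYmem⟩
      rw [hST, Finset.mem_singleton] at this
      exact hτXne (this.trans hc)
    rw [UOdec_msg m s hm Y hY hpY σ hmemY hcY, hYσ]
    cases a <;> cases b <;> simp_all
  · rw [if_neg hc]
    rw [UOdec_msg m s hm X hX hpX σ hmemX hc, hXσ]
    cases a <;> cases b <;> simp_all
end

section
/- Let m and s be positive integers with ⌈m/3⌉ < s ≤ m. Then there exist families ℛ₁, …, ℛ_m of s-element subsets of {1,…,m} that form a partition of the family of all s-element subsets of {1,…,m} (with some ℛᵢ possibly empty) such that: (a) for every i and every I ∈ ℛᵢ, i ∈ I; and (b) for every i and every I, J ∈ ℛᵢ, |I ∩ J| ≥ 2. -/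
open Finset

namespace Stmt11Aux

/-- the partner of `v` within its interval of length 3 -/
def partnerVal (v : ℕ) : ℕ := if v % 3 = 2 then v - 2 else v + 1

/-- Choose an index for a set of naturals having two elements in a common interval. -/
noncomputable def assignVal (S : Finset ℕ) : ℕ :=
  if h : (S.filter (fun a => ∃ b ∈ S, b ≠ a ∧ b / 3 = a / 3)).Nonempty then
    let k0 := ((S.filter (fun a => ∃ b ∈ S, b ≠ a ∧ b / 3 = a / 3)).image (· / 3)).min'
      (h.image _)
    if 3*k0 ∈ S ∧ 3*k0+1 ∈ S then 3*k0
    else if 3*k0+1 ∈ S then 3*k0+1 else 3*k0+2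
  else 0

lemma assign_mem (S : Finset ℕ) (hP : ∃ a ∈ S, ∃ b ∈ S, a ≠ b ∧ a / 3 = b / 3) :
    assignVal S ∈ S ∧ partnerVal (assignVal S) ∈ S ∧ partnerVal (assignVal S) ≠ assignVal S := by
  obtain ⟨a, ha, b, hb, hab, hdiv⟩ := hP
  have hT : (S.filter (fun a => ∃ b ∈ S, b ≠ a ∧ b / 3 = a / 3)).Nonempty :=
    ⟨a, by simp only [mem_filter]; exact ⟨ha, b, hb, fun e => hab e.symm, hdiv.symm⟩⟩
  rw [assignVal, dif_pos hT]
  set T := S.filter (fun a => ∃ b ∈ S, b ≠ a ∧ b / 3 = a / 3) with hTdef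
  set k0 := (T.image (· / 3)).min' (hT.image _) with hk0
  have hmem : k0 ∈ T.image (· / 3) := min'_mem _ _
  simp only [mem_image] at hmem
  obtain ⟨c, hcT, hck⟩ := hmem
  rw [hTdef, mem_filter] at hcT
  obtain ⟨hcS, d, hdS, hdc, hdc3⟩ := hcT
  have hdk : d / 3 = k0 := by rw [hdc3]; exact hck
  have hc3 : c = 3*k0 ∨ c = 3*k0+1 ∨ c = 3*k0+2 := by omega
  have hd3 : d = 3*k0 ∨ d = 3*k0+1 ∨ d = 3*k0+2 := by omega
  by_cases h1 : 3*k0 ∈ S ∧ 3*k0+1 ∈ S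
  · rw [if_pos h1]
    have : partnerVal (3*k0) = 3*k0+1 := by
      unfold partnerVal; rw [if_neg (by omega)]
    rw [this]
    exact ⟨h1.1, h1.2, by omega⟩
  · rw [if_neg h1]
    by_cases h2 : 3*k0+1 ∈ S
    · rw [if_pos h2]
      have h0 : 3*k0 ∉ S := fun hx => h1 ⟨hx, h2⟩
      have h3 : 3*k0+2 ∈ S := by
        rcases hc3 with rfl | rfl | rfl <;> rcases hd3 with rfl | rfl | rfl <;>
          first | exact absurd hcS h0 | exact absurd hdS h0 | exact hcS | exact hdS | omega
      have : partnerVal (3*k0+1) = 3*k0+2 := by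
        unfold partnerVal; rw [if_neg (by omega)]
      rw [this]
      exact ⟨h2, h3, by omega⟩
    · rw [if_neg h2]
      have h0 : 3*k0 ∈ S ∧ 3*k0+2 ∈ S := by
        rcases hc3 with rfl | rfl | rfl <;> rcases hd3 with rfl | rfl | rfl <;>
          first | exact absurd hcS h2 | exact absurd hdS h2 | omega |
            exact ⟨hcS, hdS⟩ | exact ⟨hdS, hcS⟩
      have : partnerVal (3*k0+2) = 3*k0 := by
        unfold partnerVal; rw [if_pos (by omega)]; omega
      rw [this]
      exact ⟨h0.2, h0.1, by omega⟩

lemma exists_pair {m s : ℕ} (h : (m + 2) / 3 < s) (I : Finset (Fin m))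
    (hcard : I.card = s) :
    ∃ a ∈ I.image Fin.val, ∃ b ∈ I.image Fin.val, a ≠ b ∧ a / 3 = b / 3 := by
  by_contra hc
  push_neg at hc
  have hinj : Set.InjOn (· / 3) ↑(I.image Fin.val) := by
    intro x hx y hy hxy
    by_contra hne
    exact hc x (by simpa using hx) y (by simpa using hy) hne hxy
  have h1 : ((I.image Fin.val).image (· / 3)).card = s := by
    rw [card_image_of_injOn hinj, card_image_of_injective _ Fin.val_injective, hcard]
  have h2 : (I.image Fin.val).image (· / 3) ⊆ Finset.range ((m+2)/3) := by
    intro x hx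
    simp only [mem_image] at hx
    obtain ⟨a, ha, rfl⟩ := hx
    obtain ⟨b, _, rfl⟩ := ha
    have := b.isLt
    simp only [Finset.mem_range]
    omega
  have := card_le_card h2
  rw [h1, card_range] at this
  omega

end Stmt11Aux

/-- If `⌈m/3⌉ < s ≤ m`, then there are families `ℛ 1, …, ℛ m` of
`s`-element subsets of `{1,…,m}` partitioning the family of all `s`-element subsets
(some `ℛ i` possibly empty) such that (a) every member of `ℛ i` contains `i`, and
(b) any two members of the same `ℛ i` intersect in at least two elements. -/
theorem stmt_11 (m s : ℕ) (hm : 0 < m) (hsm : s ≤ m) (h : (m + 2) / 3 < s) :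
    ∃ ℛ : Fin m → Finset (Finset (Fin m)),
      (∀ i j : Fin m, i ≠ j → Disjoint (ℛ i) (ℛ j)) ∧
      ((Finset.univ : Finset (Fin m)).biUnion ℛ =
        (Finset.univ : Finset (Fin m)).powersetCard s) ∧
      (∀ i : Fin m, ∀ I ∈ ℛ i, i ∈ I) ∧
      (∀ i : Fin m, ∀ I ∈ ℛ i, ∀ J ∈ ℛ i, 2 ≤ (I ∩ J).card) := by
  classical
  open Stmt11Aux in
  refine ⟨fun i => (Finset.univ.powersetCard s).filter
    (fun I => assignVal (I.image Fin.val) = i.val), ?_, ?_, ?_, ?_⟩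
  · intro i j hij
    simp only [disjoint_left, mem_filter]
    rintro I ⟨_, hi⟩ ⟨_, hj⟩
    exact hij (Fin.ext (hi ▸ hj ▸ rfl))
  · apply Finset.Subset.antisymm
    · intro I hI
      simp only [mem_biUnion, mem_filter] at hI
      obtain ⟨i, _, hI, _⟩ := hI
      exact hI
    · intro I hI
      have hcard : I.card = s := (Finset.mem_powersetCard.mp hI).2
      obtain ⟨hv, _, _⟩ := Stmt11Aux.assign_mem _ (Stmt11Aux.exists_pair h I hcard)
      obtain ⟨a, haI, hav⟩ := mem_image.mp hv
      simp only [mem_biUnion, mem_filter]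
      exact ⟨a, mem_univ a, hI, hav.symm⟩
  · intro i I hI
    rw [mem_filter] at hI
    have hcard : I.card = s := (Finset.mem_powersetCard.mp hI.1).2
    obtain ⟨hv, _, _⟩ := Stmt11Aux.assign_mem _ (Stmt11Aux.exists_pair h I hcard)
    rw [hI.2] at hv
    obtain ⟨a, haI, hav⟩ := mem_image.mp hv
    rwa [show a = i from Fin.ext hav] at haI
  · intro i I hI J hJ
    rw [mem_filter] at hI hJ
    have hcardI : I.card = s := (Finset.mem_powersetCard.mp hI.1).2
    have hcardJ : J.card = s := (Finset.mem_powersetCard.mp hJ.1).2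
    obtain ⟨hvI, hpI, hne⟩ := Stmt11Aux.assign_mem _ (Stmt11Aux.exists_pair h I hcardI)
    obtain ⟨hvJ, hpJ, _⟩ := Stmt11Aux.assign_mem _ (Stmt11Aux.exists_pair h J hcardJ)
    rw [hI.2] at hvI hpI hne
    rw [hJ.2] at hvJ hpJ
    obtain ⟨a, haI, hav⟩ := mem_image.mp hvI
    obtain ⟨a', haJ, hav'⟩ := mem_image.mp hvJ
    obtain ⟨b, hbI, hbv⟩ := mem_image.mp hpI
    obtain ⟨b', hbJ, hbv'⟩ := mem_image.mp hpJ
    have haa : a' = a := Fin.ext (by rw [hav, hav'])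
    have hbb : b' = b := Fin.ext (by rw [hbv, hbv'])
    rw [haa] at haJ; rw [hbb] at hbJ
    have hab : a ≠ b := fun e => hne (by rw [← hbv, ← e, hav])
    have := Finset.one_lt_card.mpr ⟨a, mem_inter.mpr ⟨haI, haJ⟩,
      b, mem_inter.mpr ⟨hbI, hbJ⟩, hab⟩
    omega
end

section
/- There exists k₀ such that for every integer k ≥ k₀ the following holds. Let ε be a real number with 0 < ε ≤ 2/5 − 18/(5k), let W be a finite set, and let S₀, S₁ ⊆ W with |S₀| = |S₁| = 2k − 1 and |S₀ ∩ S₁| ≤ εk. Color each element of W independently and uniformly at random with one of two colors A or B. Then with probability at least (1/15)·e^{−k(2−ε)/4}, one of the following two events occurs: (|S₀ ∩ A| ≥ k and |S₁ ∩ B| ≥ k) or (|S₁ ∩ A| ≥ k and |S₀ ∩ B| ≥ k). In either event the corresponding pair is a separated pair, since |S₀| = |S₁| = 2k − 1 forces the complementary intersections to have size at most k − 1. -/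
open Finset Real

private lemma choose_chain (m c : ℕ) : ∀ i : ℕ,
    Nat.choose m (c + i) * (c + 1) ^ i ≤ Nat.choose m c * (m - c) ^ i := by
  intro i
  induction i with
  | zero => simp
  | succ i ih =>
      have h2 : Nat.choose m (c + i + 1) * (c + i + 1) = Nat.choose m (c + i) * (m - (c + i)) :=
        Nat.choose_succ_right_eq m (c + i)
      have h1 : Nat.choose m (c + i + 1) * (c + 1) ≤ Nat.choose m (c + i) * (m - c) := by
        calc Nat.choose m (c + i + 1) * (c + 1)
            ≤ Nat.choose m (c + i + 1) * (c + i + 1) := Nat.mul_le_mul_left _ (by omega)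
          _ = Nat.choose m (c + i) * (m - (c + i)) := h2
          _ ≤ Nat.choose m (c + i) * (m - c) := Nat.mul_le_mul_left _ (by omega)
      calc Nat.choose m (c + (i + 1)) * (c + 1) ^ (i + 1)
          = (Nat.choose m (c + i + 1) * (c + 1)) * (c + 1) ^ i := by
            rw [pow_succ, ← add_assoc]; ring
        _ ≤ (Nat.choose m (c + i) * (m - c)) * (c + 1) ^ i := Nat.mul_le_mul_right _ h1
        _ = (Nat.choose m (c + i) * (c + 1) ^ i) * (m - c) := by ring
        _ ≤ (Nat.choose m c * (m - c) ^ i) * (m - c) := Nat.mul_le_mul_right _ ih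
        _ = Nat.choose m c * (m - c) ^ (i + 1) := by rw [pow_succ]; ring

private lemma central_bound (m : ℕ) : 2 ^ m ≤ (m + 1) * Nat.choose m (m / 2) := by
  calc 2 ^ m = ∑ i ∈ Finset.range (m + 1), Nat.choose m i := (Nat.sum_range_choose m).symm
    _ ≤ ∑ _i ∈ Finset.range (m + 1), Nat.choose m (m / 2) :=
        Finset.sum_le_sum fun i _ => Nat.choose_le_middle i m
    _ = (m + 1) * Nat.choose m (m / 2) := by simp [Finset.sum_const, mul_comm]

private lemma counting_bound (k : ℕ) (hk : 1 ≤ k) (α : Type) [DecidableEq α]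
    (W S₀ S₁ : Finset α)
    (hS₀W : S₀ ⊆ W) (hS₁W : S₁ ⊆ W) (h1 : S₁.card = 2 * k - 1) :
    ((S₀ \ S₁).card.choose k) *
      (((S₁ \ S₀).powerset.filter (fun T => T.card ≤ k - 1)).card * 2 ^ (W \ (S₀ ∪ S₁)).card)
      ≤ (W.powerset.filter (fun A =>
              (k ≤ (S₀ ∩ A).card ∧ k ≤ (S₁ \ A).card) ∨
              (k ≤ (S₁ ∩ A).card ∧ k ≤ (S₀ \ A).card))).card := by
  classical
  set X := S₀ \ S₁ with hX
  set Y := S₁ \ S₀ with hY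
  set R := W \ (S₀ ∪ S₁) with hR
  set G := (X.powersetCard k) ×ˢ ((Y.powerset.filter (fun T => T.card ≤ k - 1)) ×ˢ R.powerset)
    with hG
  have hcard : G.card = X.card.choose k *
      (((Y.powerset.filter (fun T => T.card ≤ k - 1))).card * 2 ^ R.card) := by
    simp [hG, Finset.card_product, Finset.card_powersetCard, Finset.card_powerset]
  rw [← hcard]
  apply Finset.card_le_card_of_injOn (fun p => p.1 ∪ p.2.1 ∪ p.2.2)
  · rintro ⟨a, b, c⟩ hp
    simp only [hG, Finset.mem_coe, Finset.mem_product, Finset.mem_powersetCard, Finset.mem_filter,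
      Finset.mem_powerset] at hp
    obtain ⟨⟨haX, hak⟩, ⟨hbY, hbk⟩, hcR⟩ := hp
    simp only [Finset.mem_coe, Finset.mem_filter, Finset.mem_powerset]
    have haW : a ⊆ W := haX.trans ((Finset.sdiff_subset).trans hS₀W)
    have hbW : b ⊆ W := hbY.trans ((Finset.sdiff_subset).trans hS₁W)
    have hcW : c ⊆ W := hcR.trans Finset.sdiff_subset
    refine ⟨Finset.union_subset (Finset.union_subset haW hbW) hcW, Or.inl ⟨?_, ?_⟩⟩
    · have : a ⊆ S₀ ∩ (a ∪ b ∪ c) := by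
        intro x hx
        exact Finset.mem_inter.2 ⟨(Finset.sdiff_subset) (haX hx),
          Finset.mem_union.2 (Or.inl (Finset.mem_union.2 (Or.inl hx)))⟩
      calc k = a.card := hak.symm
        _ ≤ _ := Finset.card_le_card this
    · have hsub : S₁ ∩ (a ∪ b ∪ c) ⊆ b := by
        intro x hx
        obtain ⟨hx1, hx2⟩ := Finset.mem_inter.1 hx
        rcases Finset.mem_union.1 hx2 with hx3 | hx3
        · rcases Finset.mem_union.1 hx3 with hx4 | hx4
          · exact absurd hx1 (Finset.mem_sdiff.1 (haX hx4)).2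
          · exact hx4
        · exact absurd (Finset.mem_union.2 (Or.inr hx1)) (Finset.mem_sdiff.1 (hcR hx3)).2
      have h2 : (S₁ ∩ (a ∪ b ∪ c)).card ≤ k - 1 := le_trans (Finset.card_le_card hsub) hbk
      have h3 := Finset.card_inter_add_card_sdiff S₁ (a ∪ b ∪ c)
      omega
  · rintro ⟨a, b, c⟩ hp ⟨a', b', c'⟩ hq h
    simp only [hG, Finset.coe_product, Set.mem_prod] at hp hq
    simp only [Finset.mem_coe, Finset.mem_powersetCard, Finset.mem_filter,
      Finset.mem_powerset] at hp hq
    obtain ⟨⟨haX, -⟩, ⟨hbY, -⟩, hcR⟩ := hp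
    obtain ⟨⟨haX', -⟩, ⟨hbY', -⟩, hcR'⟩ := hq
    have key : ∀ (a b c : Finset α), a ⊆ X → b ⊆ Y → c ⊆ R →
        ((a ∪ b ∪ c) ∩ X = a ∧ (a ∪ b ∪ c) ∩ Y = b ∧ (a ∪ b ∪ c) ∩ R = c) := by
      intro a b c ha hb hc
      have dXY : ∀ x, x ∈ Y → x ∉ X := fun x hx hx' =>
        (Finset.mem_sdiff.1 hx').2 (Finset.mem_sdiff.1 hx).1
      have dXR : ∀ x, x ∈ R → x ∉ X := fun x hx hx' =>
        (Finset.mem_sdiff.1 hx).2 (Finset.mem_union.2 (Or.inl (Finset.mem_sdiff.1 hx').1))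
      have dYR : ∀ x, x ∈ R → x ∉ Y := fun x hx hx' =>
        (Finset.mem_sdiff.1 hx).2 (Finset.mem_union.2 (Or.inr (Finset.mem_sdiff.1 hx').1))
      refine ⟨?_, ?_, ?_⟩ <;> ext x <;>
        simp only [Finset.mem_inter, Finset.mem_union] <;> constructor
      · rintro ⟨(h | h) | h, hx⟩
        · exact h
        · exact absurd hx (dXY x (hb h))
        · exact absurd hx (dXR x (hc h))
      · exact fun h => ⟨Or.inl (Or.inl h), ha h⟩
      · rintro ⟨(h | h) | h, hx⟩
        · exact absurd (ha h) (dXY x hx)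
        · exact h
        · exact absurd hx (dYR x (hc h))
      · exact fun h => ⟨Or.inl (Or.inr h), hb h⟩
      · rintro ⟨(h | h) | h, hx⟩
        · exact absurd (ha h) (dXR x hx)
        · exact absurd (hb h) (dYR x hx)
        · exact h
      · exact fun h => ⟨Or.inr h, hc h⟩
    obtain ⟨e1, e2, e3⟩ := key a b c haX hbY hcR
    obtain ⟨f1, f2, f3⟩ := key a' b' c' haX' hbY' hcR'
    simp only at h
    refine Prod.ext ?_ (Prod.ext ?_ ?_) <;> simp only
    · rw [← e1, ← f1, h]
    · rw [← e2, ← f2, h]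
    · rw [← e3, ← f3, h]

private lemma half_bound (k : ℕ) (α : Type) [DecidableEq α] (Y : Finset α)
    (hY : Y.card ≤ 2 * k - 1) (hk : 1 ≤ k) :
    2 ^ Y.card ≤ 2 * (Y.powerset.filter (fun T => T.card ≤ k - 1)).card := by
  classical
  have hsplit := Finset.card_filter_add_card_filter_not
    (s := Y.powerset) (p := fun T => T.card ≤ k - 1)
  have hle : (Y.powerset.filter (fun T => ¬ T.card ≤ k - 1)).card ≤
      (Y.powerset.filter (fun T => T.card ≤ k - 1)).card := by
    apply Finset.card_le_card_of_injOn (fun T => Y \ T)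
    · intro T hT
      simp only [Finset.mem_coe, Finset.mem_filter, Finset.mem_powerset] at hT ⊢
      obtain ⟨hTY, hTk⟩ := hT
      have := Finset.card_sdiff_of_subset hTY
      exact ⟨Finset.sdiff_subset, by omega⟩
    · intro T hT T' hT' h
      simp only [Finset.coe_filter, Set.mem_setOf_eq, Finset.mem_powerset] at hT hT'
      have e1 : Y \ (Y \ T) = T := by
        rw [Finset.sdiff_sdiff_self_left]; exact Finset.inter_eq_right.2 hT.1
      have e2 : Y \ (Y \ T') = T' := by
        rw [Finset.sdiff_sdiff_self_left]; exact Finset.inter_eq_right.2 hT'.1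
      simp only at h; rw [← e1, ← e2, h]
  rw [Finset.card_powerset] at hsplit
  omega

private lemma numeric_bound_s12 (k t i m : ℕ) (ε : ℝ) (hk : 10000 ≤ k) (hε0 : 0 < ε)
    (hε1 : ε ≤ 2 / 5 - 18 / (5 * (k : ℝ))) (ht : (t : ℝ) ≤ ε * k)
    (hi : (i : ℝ) ≤ ((t : ℝ) + 1) / 2) (hm : m ≤ 2 * k - 1) :
    (1 / 15 : ℝ) * Real.exp (-((k : ℝ) * (2 - ε)) / 4) ≤
      (((k : ℝ) - t) / k) ^ i / (((m : ℝ) + 1) * 2 ^ (t + 1)) := by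
  have hkR : (10000 : ℝ) ≤ (k : ℝ) := by exact_mod_cast hk
  have hkpos : (0 : ℝ) < k := by linarith
  have hεk : ε * k ≤ 2 / 5 * k - 18 / 5 := by
    have h := mul_le_mul_of_nonneg_right hε1 (le_of_lt hkpos)
    have h2 : (2 / 5 - 18 / (5 * (k : ℝ))) * k = 2 / 5 * k - 18 / 5 := by
      field_simp
    linarith [h, h2.le, h2.ge]
  have htk : (t : ℝ) ≤ 2 / 5 * k - 18 / 5 := le_trans ht hεk
  have hlog2 : Real.log 2 < 0.6931471808 := Real.log_two_lt_d9
  have hlog2' : (0:ℝ) < Real.log 2 := Real.log_pos (by norm_num)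
  have hfrac : (3 / 5 : ℝ) ≤ ((k : ℝ) - t) / k := by
    rw [le_div_iff₀ hkpos]
    linarith
  have h53 : Real.exp (-(0.53 : ℝ)) ≤ 3 / 5 := by
    rw [Real.exp_neg, inv_le_comm₀ (Real.exp_pos _) (by norm_num)]
    rw [show ((3 / 5 : ℝ))⁻¹ = 5 / 3 by norm_num]
    have hl : Real.log (5 / 3 : ℝ) ≤ 0.53 := by
      have h4 : Real.log ((5 / 3 : ℝ) ^ 4) ≤ Real.log (2 ^ 3 : ℝ) := by
        apply Real.log_le_log (by positivity)
        norm_num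
      rw [Real.log_pow, Real.log_pow] at h4
      push_cast at h4
      linarith
    calc (5 / 3 : ℝ) = Real.exp (Real.log (5 / 3)) := (Real.exp_log (by norm_num)).symm
      _ ≤ Real.exp 0.53 := Real.exp_le_exp.2 hl
  have hmexp : ((m : ℝ) + 1) ≤ Real.exp ((k : ℝ) / 1000 + 6.7) := by
    have hm2 : ((m : ℝ) + 1) ≤ 2 * k := by
      have : (m : ℝ) ≤ 2 * (k : ℝ) - 1 := by
        have : (m : ℝ) ≤ ((2 * k - 1 : ℕ) : ℝ) := by exact_mod_cast hm
        push_cast [Nat.cast_sub (by omega : 1 ≤ 2 * k)] at this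
        linarith
      linarith
    have hpos : (0 : ℝ) < (m : ℝ) + 1 := by positivity
    rw [← Real.exp_log hpos]
    apply Real.exp_le_exp.2
    have hlogm : Real.log ((m : ℝ) + 1) ≤ Real.log (2 * k) := Real.log_le_log hpos hm2
    have hsplit : Real.log (2 * (k : ℝ)) = Real.log 2 + Real.log k :=
      Real.log_mul (by norm_num) (ne_of_gt hkpos)
    have hlogk : Real.log (k : ℝ) = Real.log ((k : ℝ) / 1000) + Real.log 1000 := by
      rw [← Real.log_mul (by positivity) (by norm_num)]
      congr 1
      field_simp
    have h1 : Real.log ((k : ℝ) / 1000) ≤ (k : ℝ) / 1000 - 1 :=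
      Real.log_le_sub_one_of_pos (by positivity)
    have h2 : Real.log (1000 : ℝ) ≤ 10 * Real.log 2 := by
      calc Real.log (1000 : ℝ) ≤ Real.log (1024 : ℝ) := Real.log_le_log (by norm_num) (by norm_num)
        _ = Real.log ((2 : ℝ) ^ 10) := by norm_num
        _ = 10 * Real.log 2 := by rw [Real.log_pow]; push_cast; ring
    linarith
  have h2exp : (2 : ℝ) ^ (t + 1) ≤ Real.exp (0.7 * ((t : ℝ) + 1)) := by
    have h2e : (2 : ℝ) ≤ Real.exp 0.7 := by
      calc (2 : ℝ) = Real.exp (Real.log 2) := (Real.exp_log (by norm_num)).symm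
        _ ≤ Real.exp 0.7 := Real.exp_le_exp.2 (by linarith)
    calc (2 : ℝ) ^ (t + 1) ≤ (Real.exp 0.7) ^ (t + 1) :=
          pow_le_pow_left₀ (by norm_num) h2e _
      _ = Real.exp (0.7 * ((t : ℝ) + 1)) := by
          rw [← Real.exp_nat_mul]; push_cast; ring_nf
  have hnum : (((k : ℝ) - t) / k) ^ i ≥ Real.exp (-(0.53 : ℝ) * i) := by
    calc Real.exp (-(0.53 : ℝ) * i) = (Real.exp (-(0.53:ℝ))) ^ i := by
          rw [← Real.exp_nat_mul]; ring_nf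
      _ ≤ (3 / 5 : ℝ) ^ i := pow_le_pow_left₀ (le_of_lt (Real.exp_pos _)) h53 _
      _ ≤ (((k : ℝ) - t) / k) ^ i := pow_le_pow_left₀ (by norm_num) hfrac _
  have hden : ((m : ℝ) + 1) * 2 ^ (t + 1) ≤
      Real.exp ((k : ℝ) / 1000 + 6.7 + 0.7 * ((t : ℝ) + 1)) := by
    rw [Real.exp_add]
    exact mul_le_mul hmexp h2exp (by positivity) (le_of_lt (Real.exp_pos _))
  have hdenpos : (0 : ℝ) < ((m : ℝ) + 1) * 2 ^ (t + 1) := by positivity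
  have hchain : Real.exp (-(0.53:ℝ) * i - ((k : ℝ) / 1000 + 6.7 + 0.7 * ((t : ℝ) + 1))) ≤
      (((k : ℝ) - t) / k) ^ i / (((m : ℝ) + 1) * 2 ^ (t + 1)) := by
    rw [Real.exp_sub, div_le_div_iff₀ (Real.exp_pos _) hdenpos]
    exact mul_le_mul hnum hden (by positivity) (by positivity)
  refine le_trans ?_ hchain
  have hexp : -((k : ℝ) * (2 - ε)) / 4 ≤
      -(0.53:ℝ) * i - ((k : ℝ) / 1000 + 6.7 + 0.7 * ((t : ℝ) + 1)) := by
    linarith [hi, ht, hεk, hkR]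
  calc (1 / 15 : ℝ) * Real.exp (-((k : ℝ) * (2 - ε)) / 4)
      ≤ 1 * Real.exp (-((k : ℝ) * (2 - ε)) / 4) := by
        apply mul_le_mul_of_nonneg_right (by norm_num) (le_of_lt (Real.exp_pos _))
    _ = Real.exp (-((k : ℝ) * (2 - ε)) / 4) := one_mul _
    _ ≤ _ := Real.exp_le_exp.2 hexp

/-- For all large enough `k`, any `0 < ε ≤ 2/5 − 18/(5k)`, and any sets
`S₀, S₁ ⊆ W` of size `2k − 1` with `|S₀ ∩ S₁| ≤ εk`: if each element of `W` is colored
independently and uniformly with one of two colors (equivalently, a uniformly random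
subset `A ⊆ W` is chosen, with `B = W \ A`), then with probability at least
`(1/15)·e^{−k(2−ε)/4}` either (`|S₀ ∩ A| ≥ k` and `|S₁ ∩ B| ≥ k`) or
(`|S₁ ∩ A| ≥ k` and `|S₀ ∩ B| ≥ k`), i.e. one of `(S₀, S₁)`, `(S₁, S₀)` is a
separated pair with respect to `(A, B)`. -/
theorem stmt_12 :
    ∃ k₀ : ℕ, ∀ k : ℕ, k₀ ≤ k →
      ∀ ε : ℝ, 0 < ε → ε ≤ 2 / 5 - 18 / (5 * (k : ℝ)) →
        ∀ (α : Type) [DecidableEq α], ∀ W S₀ S₁ : Finset α,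
          S₀ ⊆ W → S₁ ⊆ W → S₀.card = 2 * k - 1 → S₁.card = 2 * k - 1 →
          ((S₀ ∩ S₁).card : ℝ) ≤ ε * (k : ℝ) →
          (1 / 15 : ℝ) * Real.exp (-((k : ℝ) * (2 - ε)) / 4) ≤
            ((W.powerset.filter (fun A =>
              (k ≤ (S₀ ∩ A).card ∧ k ≤ (S₁ \ A).card) ∨
              (k ≤ (S₁ ∩ A).card ∧ k ≤ (S₀ \ A).card))).card : ℝ) / 2 ^ W.card := by
  classical
  refine ⟨10000, fun k hk ε hε0 hε1 α _ W S₀ S₁ hS₀W hS₁W h0 h1 hint => ?_⟩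
  set t := (S₀ ∩ S₁).card with htdef
  have hkR : (10000 : ℝ) ≤ (k : ℝ) := by exact_mod_cast hk
  have hkpos : (0 : ℝ) < k := by linarith
  -- t ≤ k - 1
  have hεk : ε * k ≤ 2 / 5 * k - 18 / 5 := by
    have h := mul_le_mul_of_nonneg_right hε1 (le_of_lt hkpos)
    have h2 : (2 / 5 - 18 / (5 * (k : ℝ))) * k = 2 / 5 * k - 18 / 5 := by
      field_simp
    linarith [h, h2.le, h2.ge]
  have htkR : (t : ℝ) < k := by linarith [hint, hεk]
  have htk : t ≤ k - 1 := by
    have : t < k := by exact_mod_cast htkR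
    omega
  set m := 2 * k - 1 - t with hmdef
  set c := k - 1 - t with hcdef
  set i := (t + 1) / 2 with hidef
  have hk1 : 1 ≤ k := by omega
  -- set cardinalities
  have hXcard : (S₀ \ S₁).card = m := by
    have := Finset.card_inter_add_card_sdiff S₀ S₁
    omega
  have hYcard : (S₁ \ S₀).card = m := by
    have h := Finset.card_inter_add_card_sdiff S₁ S₀
    rw [Finset.inter_comm] at h
    omega
  have hUsub : S₀ ∪ S₁ ⊆ W := Finset.union_subset hS₀W hS₁W
  have hUcard : (S₀ ∪ S₁).card = 4 * k - 2 - t := by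
    have := Finset.card_union_add_card_inter S₀ S₁
    omega
  have hRcard : (W \ (S₀ ∪ S₁)).card = W.card - (4 * k - 2 - t) := by
    rw [Finset.card_sdiff_of_subset hUsub, hUcard]
  have huW : 4 * k - 2 - t ≤ W.card := by
    have := Finset.card_le_card hUsub
    omega
  -- binomial chain
  have hchain := choose_chain m c i
  have e1 : c + i = m / 2 := by omega
  have e2 : c + 1 = k - t := by omega
  have e3 : m - c = k := by omega
  have e4 : m.choose c = m.choose k := by
    rw [show c = m - k by omega]
    exact Nat.choose_symm (by omega)
  rw [e1, e2, e3, e4] at hchain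
  have N3 : 2 ^ m * (k - t) ^ i ≤ (m + 1) * (m.choose k * k ^ i) := by
    calc 2 ^ m * (k - t) ^ i ≤ ((m + 1) * m.choose (m / 2)) * (k - t) ^ i :=
          Nat.mul_le_mul_right _ (central_bound m)
      _ = (m + 1) * (m.choose (m / 2) * (k - t) ^ i) := by ring
      _ ≤ (m + 1) * (m.choose k * k ^ i) := Nat.mul_le_mul_left _ hchain
  -- counting
  set H := ((S₁ \ S₀).powerset.filter (fun T => T.card ≤ k - 1)).card with hHdef
  set F := (W.powerset.filter (fun A =>
              (k ≤ (S₀ ∩ A).card ∧ k ≤ (S₁ \ A).card) ∨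
              (k ≤ (S₁ ∩ A).card ∧ k ≤ (S₀ \ A).card))) with hFdef
  have N1 : m.choose k * (H * 2 ^ (W.card - (4 * k - 2 - t))) ≤ F.card := by
    have := counting_bound k hk1 α W S₀ S₁ hS₀W hS₁W h1
    rw [hXcard, hRcard] at this
    exact this
  have N2 : 2 ^ m ≤ 2 * H := by
    have := half_bound k α (S₁ \ S₀) (by omega) hk1
    rw [hYcard] at this
    exact this
  -- step B : choose / 4^k ≤ F.card / 2^w
  have natB : m.choose k * 2 ^ W.card ≤ F.card * 2 ^ (2 * k) := by
    have epow : 2 ^ (W.card + 1) =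
        2 ^ (W.card - (4 * k - 2 - t)) * (2 ^ m * 2 ^ (2 * k)) := by
      rw [← pow_add, ← pow_add]
      congr 1
      omega
    have h2 : 2 * (m.choose k * 2 ^ W.card) ≤ 2 * (F.card * 2 ^ (2 * k)) := by
      calc 2 * (m.choose k * 2 ^ W.card) = m.choose k * 2 ^ (W.card + 1) := by ring
        _ = m.choose k * (2 ^ (W.card - (4 * k - 2 - t)) * (2 ^ m * 2 ^ (2 * k))) := by
            rw [epow]
        _ ≤ m.choose k * (2 ^ (W.card - (4 * k - 2 - t)) * ((2 * H) * 2 ^ (2 * k))) :=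
            Nat.mul_le_mul_left _ (Nat.mul_le_mul_left _ (Nat.mul_le_mul_right _ N2))
        _ = (m.choose k * (H * 2 ^ (W.card - (4 * k - 2 - t)))) * 2 ^ (2 * k) * 2 := by ring
        _ ≤ F.card * 2 ^ (2 * k) * 2 := Nat.mul_le_mul_right _ (Nat.mul_le_mul_right _ N1)
        _ = 2 * (F.card * 2 ^ (2 * k)) := by ring
    omega
  have stepB : (m.choose k : ℝ) / 2 ^ (2 * k) ≤ (F.card : ℝ) / 2 ^ W.card := by
    rw [div_le_div_iff₀ (by positivity) (by positivity)]
    exact_mod_cast natB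
  -- step A : ratio bound ≤ choose / 4^k
  have hcastkt : ((k - t : ℕ) : ℝ) = (k : ℝ) - t := by
    push_cast [Nat.cast_sub (by omega : t ≤ k)]
    ring
  have hN3R : (2 : ℝ) ^ m * ((k : ℝ) - t) ^ i ≤
      ((m : ℝ) + 1) * ((m.choose k : ℝ) * (k : ℝ) ^ i) := by
    rw [← hcastkt]
    exact_mod_cast N3
  have stepA : (((k : ℝ) - t) / k) ^ i / (((m : ℝ) + 1) * 2 ^ (t + 1)) ≤
      (m.choose k : ℝ) / 2 ^ (2 * k) := by
    rw [div_le_div_iff₀ (by positivity) (by positivity)]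
    apply le_of_mul_le_mul_right _ (show (0:ℝ) < (k : ℝ) ^ i by positivity)
    have h2pow : (2 : ℝ) ^ (2 * k) = 2 ^ m * 2 ^ (t + 1) := by
      rw [← pow_add]
      congr 1
      omega
    have hktnn : (0:ℝ) ≤ (k : ℝ) - t := by linarith
    calc (((k : ℝ) - t) / k) ^ i * 2 ^ (2 * k) * (k : ℝ) ^ i
        = ((2 : ℝ) ^ m * ((k : ℝ) - t) ^ i) * 2 ^ (t + 1) := by
          rw [div_pow, h2pow]
          field_simp
      _ ≤ (((m : ℝ) + 1) * ((m.choose k : ℝ) * (k : ℝ) ^ i)) * 2 ^ (t + 1) := by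
          apply mul_le_mul_of_nonneg_right hN3R (by positivity)
      _ = (m.choose k : ℝ) * (((m : ℝ) + 1) * 2 ^ (t + 1)) * (k : ℝ) ^ i := by ring
  -- numeric bound
  have hiR : (i : ℝ) ≤ ((t : ℝ) + 1) / 2 := by
    have h2i : 2 * i ≤ t + 1 := by omega
    have : (2 * i : ℝ) ≤ (t : ℝ) + 1 := by exact_mod_cast h2i
    linarith
  have hnumeric := numeric_bound_s12 k t i m ε hk hε0 hε1 hint hiR (by omega)
  calc (1 / 15 : ℝ) * Real.exp (-((k : ℝ) * (2 - ε)) / 4)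
      ≤ (((k : ℝ) - t) / k) ^ i / (((m : ℝ) + 1) * 2 ^ (t + 1)) := hnumeric
    _ ≤ (m.choose k : ℝ) / 2 ^ (2 * k) := stepA
    _ ≤ (F.card : ℝ) / 2 ^ W.card := stepB
end
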